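/- The compact elements of the dcpo Pom(L) are exactly the finite pomsets: K(Pom(L)) = Pom_fin(L). -/

import Mathlib

/-! ## Boolean formulae over node variables -/

inductive Form where
  | top : Form
  | bot : Form
  | conj : Form → Form → Form
  | disj : Form → Form → Form
  | neg : Form → Form
  | var : ℕ → Form

def Form.sat (v : ℕ → Bool) : Form → Prop
  | .top => True
  | .bot => False
  | .conj a b => a.sat v ∧ b.sat v
  | .disj a b => a.sat v ∨ b.sat v
  | .neg a => ¬ a.sat v
  | .var x => v x = true

def Form.vars : Form → Set ℕ
  | .top => ∅
  | .bot => ∅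
  | .conj a b => a.vars ∪ b.vars
  | .disj a b => a.vars ∪ b.vars
  | .neg a => a.vars
  | .var x => {x}

def Form.rename (f : ℕ → ℕ) : Form → Form
  | .top => .top
  | .bot => .bot
  | .conj a b => .conj (a.rename f) (b.rename f)
  | .disj a b => .disj (a.rename f) (b.rename f)
  | .neg a => .neg (a.rename f)
  | .var x => .var (f x)

/-! ## Labels: a pointed, finitely preceded dcpo -/

class LabelDCPO (L : Type) extends PartialOrder L, OrderBot L where
  directedSupExists : ∀ S : Set L, S.Nonempty → DirectedOn (· ≤ ·) S → ∃ b, IsLUB S b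
  finitelyPreceded : ∀ l : L, {l' : L | l' < l}.Finite

/-- The level of a node: length of the longest strict chain ending at it. -/
noncomputable def levOf (lt : ℕ → ℕ → Prop) (x : ℕ) : ℕ :=
  sSup {n | ∃ c : ℕ → ℕ, c n = x ∧ ∀ i < n, lt (c i) (c (i + 1))}

/-! ## Labelled partial orders with formulae -/

structure LPOF (L : Type) [LabelDCPO L] where
  N : Set ℕ
  lt : ℕ → ℕ → Prop
  lab : ℕ → L
  form : ℕ → Form
  lt_mem : ∀ {x y}, lt x y → x ∈ N ∧ y ∈ N
  lt_trans : ∀ {x y z}, lt x y → lt y z → lt x z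
  lt_irrefl : ∀ x, ¬ lt x x
  finPred : ∀ x, {y | lt y x}.Finite
  finLevel : ∀ n, {x ∈ N | levOf lt x = n}.Finite
  singleRoot : ∃! r, r ∈ N ∧ ∀ y, ¬ lt y r
  bot_maximal : ∀ x ∈ N, lab x = ⊥ → ∀ y, ¬ lt x y
  form_sat : ∀ x ∈ N, ∃ v, (form x).sat v
  form_free : ∀ x ∈ N, ∀ y ∈ (form x).vars, lt y x
  form_impl : ∀ {x y}, lt x y → ∀ v, (form y).sat v → (form x).sat v
  lab_junk : ∀ x, x ∉ N → lab x = ⊥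
  form_junk : ∀ x, x ∉ N → form x = Form.top

variable {L : Type} [LabelDCPO L]

/-- The set of ⊥-labelled nodes. -/
def LPOF.Bot (α : LPOF L) : Set ℕ := {x ∈ α.N | α.lab x = ⊥}

/-- Strict successors of a set of nodes. -/
def LPOF.succPlus (α : LPOF L) (X : Set ℕ) : Set ℕ := {y | ∃ x ∈ X, α.lt x y}

/-- Immediate successors of a node. -/
def LPOF.succs (α : LPOF L) (x : ℕ) : Set ℕ :=
  {y | α.lt x y ∧ ¬ ∃ z, α.lt x z ∧ α.lt z y}

/-- The order ⊑ on LPOFs. -/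
def LPOF.le (α β : LPOF L) : Prop :=
  α.N ⊆ β.N ∧
  (∀ x ∈ α.N, ∀ y, β.lt y x → y ∈ α.N) ∧
  (∀ x y, α.lt x y ↔ (β.lt x y ∧ x ∈ α.N ∧ y ∈ α.N)) ∧
  (∀ x ∈ α.N, α.lab x ≤ β.lab x) ∧
  (∀ x ∈ α.N, α.form x = β.form x) ∧
  (∀ x ∈ α.N, α.succs x = β.succs x \ β.succPlus α.Bot)

/-! ## Generic suprema w.r.t. a relation -/

def isUB {X : Type*} (le : X → X → Prop) (D : Set X) (b : X) : Prop :=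
  ∀ a ∈ D, le a b

def isSup {X : Type*} (le : X → X → Prop) (D : Set X) (b : X) : Prop :=
  isUB le D b ∧ ∀ c, isUB le D c → le b c

/-! ## Isomorphism and pomsets with formulae -/

def LPOF.iso (α β : LPOF L) : Prop :=
  ∃ f : ℕ → ℕ, Set.BijOn f α.N β.N ∧
    (∀ x ∈ α.N, ∀ y ∈ α.N, (α.lt x y ↔ β.lt (f x) (f y))) ∧
    (∀ x ∈ α.N, β.lab (f x) = α.lab x) ∧
    (∀ x ∈ α.N, β.form (f x) = (α.form x).rename f)

def isoClass (α : LPOF L) : Set (LPOF L) := {β | α.iso β}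

def Pom (L : Type) [LabelDCPO L] : Type := {A : Set (LPOF L) // ∃ α, A = isoClass α}

def pomLe (A B : Pom L) : Prop := ∀ α ∈ A.1, ∃ β ∈ B.1, LPOF.le α β

def PomFinite (A : Pom L) : Prop := ∀ α ∈ A.1, α.N.Finite

/-! ## The singleton ⊥ LPOF and the bottom pomset -/

def botLPOF (x₀ : ℕ) : LPOF L where
  N := {x₀}
  lt _ _ := False
  lab _ := ⊥
  form _ := Form.top
  lt_mem h := h.elim
  lt_trans h _ := h.elim
  lt_irrefl _ h := h
  finPred _ := Set.finite_empty.subset (by intro y hy; exact hy.elim)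
  finLevel _ := (Set.finite_singleton x₀).subset (fun y hy => hy.1)
  singleRoot := ⟨x₀, ⟨rfl, fun _ h => h⟩, fun r hr => hr.1⟩
  bot_maximal _ _ _ _ h := h
  form_sat _ _ := ⟨fun _ => true, by simp [Form.sat]⟩
  form_free _ _ y hy := by simp [Form.vars] at hy
  form_impl h := h.elim
  lab_junk _ _ := rfl
  form_junk _ _ := rfl

def botPom : Pom L := ⟨isoClass (botLPOF 0), ⟨botLPOF 0, rfl⟩⟩

/-! ## Stuck formulae, extensible nodes, branches (semantically) -/

def stuckSat (α : LPOF L) (v : ℕ → Bool) : Prop :=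
  ∃ x ∈ α.N, α.lab x = ⊥ ∧ (α.form x).sat v

def extens (α : LPOF L) : Set ℕ :=
  {x ∈ α.N | ¬ ∀ v, (α.form x).sat v → stuckSat α v}

def branchSat (α : LPOF L) (S : Set ℕ) (v : ℕ → Bool) : Prop :=
  ∀ x ∈ S, (α.form x).sat v

def IsBranch (α : LPOF L) (S : Set ℕ) : Prop :=
  S.Nonempty ∧ S ⊆ extens α ∧
  (∀ v, branchSat α S v → ¬ stuckSat α v) ∧
  (∀ T, S ⊂ T → T ⊆ extens α → ¬ ∃ v, branchSat α T v)

def brSet (α : LPOF L) : Set ((ℕ → Bool) → Prop) :=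
  {p | ∃ S, IsBranch α S ∧ p = branchSat α S}

/-! ## Truncation (relationally) -/

def IsTrunc (α : LPOF L) (n : ℕ) (β : LPOF L) : Prop :=
  β.N = {x ∈ α.N | levOf α.lt x ≤ n} ∧
  (∀ x y, β.lt x y ↔ (α.lt x y ∧ x ∈ β.N ∧ y ∈ β.N)) ∧
  (∀ x ∈ β.N, (levOf α.lt x < n → β.lab x = α.lab x) ∧
    (levOf α.lt x = n → β.lab x = ⊥)) ∧
  (∀ x ∈ β.N, β.form x = α.form x)

/-! ## Guarded choice (relationally) -/

def IsGuard (x₀ : ℕ) (ℓ : L) (α β γ : LPOF L) : Prop :=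
  γ.N = insert x₀ (α.N ∪ β.N) ∧
  (∀ a b, γ.lt a b ↔ (α.lt a b ∨ β.lt a b ∨ (a = x₀ ∧ b ∈ α.N ∪ β.N))) ∧
  γ.lab x₀ = ℓ ∧
  (∀ y ∈ α.N, γ.lab y = α.lab y) ∧
  (∀ y ∈ β.N, γ.lab y = β.lab y) ∧
  γ.form x₀ = Form.top ∧
  (∀ y ∈ α.N, γ.form y = Form.conj (α.form y) (Form.var x₀)) ∧
  (∀ y ∈ β.N, γ.form y = Form.conj (β.form y) (Form.neg (Form.var x₀)))

def setLe (A B : Set (LPOF L)) : Prop := ∀ α ∈ A, ∃ β ∈ B, LPOF.le α β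

def guardSet (ℓ : L) (A B : Set (LPOF L)) : Set (LPOF L) :=
  {γ | ∃ x₀ α β, α ∈ A ∧ β ∈ B ∧ Disjoint α.N β.N ∧ x₀ ∉ α.N ∧ x₀ ∉ β.N ∧
    IsGuard x₀ ℓ α β γ}

/-! ## Sequential composition (relationally) -/

def CopyFn (α β : LPOF L) (f : Set ℕ → LPOF L) : Prop :=
  ∀ S, IsBranch α S →
    β.iso (f S) ∧ Disjoint (f S).N α.N ∧
    ∀ S', IsBranch α S' → S ≠ S' → Disjoint (f S).N (f S').N

def IsSeq (α β : LPOF L) (f : Set ℕ → LPOF L) (γ : LPOF L) : Prop :=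
  (γ.N = α.N ∪ ⋃ S ∈ {S : Set ℕ | IsBranch α S}, (f S).N) ∧
  (∀ a b, γ.lt a b ↔ (α.lt a b ∨ ∃ S, IsBranch α S ∧
    ((f S).lt a b ∨
      (a ∈ α.N ∧ (∀ v, branchSat α S v → (α.form a).sat v) ∧ b ∈ (f S).N)))) ∧
  (∀ x ∈ α.N, γ.lab x = α.lab x ∧ γ.form x = α.form x) ∧
  (∀ S, IsBranch α S → ∀ x ∈ (f S).N,
    γ.lab x = (f S).lab x ∧
    ∀ v, (γ.form x).sat v ↔ (((f S).form x).sat v ∧ branchSat α S v))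

def seqSet (A B : Set (LPOF L)) : Set (LPOF L) :=
  {γ | ∃ α ∈ A, ∃ β ∈ B, ∃ f, CopyFn α β f ∧ IsSeq α β f γ}

/-! ## Way-below and compactness in Pom(L) -/

def wayBelow (A B : Pom L) : Prop :=
  ∀ D : Set (Pom L), D.Nonempty → DirectedOn pomLe D →
    ∀ S, isSup pomLe D S → pomLe B S → ∃ C ∈ D, pomLe A C

def pomCompact (A : Pom L) : Prop := wayBelow A A

/-!
Compact ⇒ finite: an infinite representative `α` of `A` lies below a `⊥`-free `S` with the same
nodes, and `S` is the supremum of its truncations `S.trunc n` (König's lemma, proved by taking an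
ultrafilter limit of the embeddings of the truncations into an upper bound). Compactness then puts
`A` below some finite truncation.

Finite ⇒ compact: let `D` be directed with supremum `S'` and `σ ∈ S'`. Pick representatives
`γ C ⊑ σ` of the `C ∈ D` and an ultrafilter `U` on `D` refining its order. The `U`-limit `ρ ⊑ σ`
(nodes eventually present, labels eventually attained; labels are finitely preceded) is an upper
bound of `D`, because the embeddings `γ C → γ C'` converge along `U`: a node has only finitely
many candidate images, those of its level. So `σ` embeds into its prefix `ρ`, and as levels are
finite this forces `ρ = σ`. Hence the finitely many nodes of a representative of `A` below `σ`
appear with their labels in `γ C` for `U`-many `C`.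
-/

namespace Form

lemma rename_comp (f g : ℕ → ℕ) (φ : Form) : (φ.rename f).rename g = φ.rename (g ∘ f) := by
  induction φ <;> simp_all [rename]

lemma rename_congr {f g : ℕ → ℕ} (φ : Form) (h : ∀ x ∈ φ.vars, f x = g x) :
    φ.rename f = φ.rename g := by
  induction φ <;> simp_all [rename, vars]

lemma rename_id (φ : Form) : φ.rename id = φ := by
  induction φ <;> simp_all [rename]

lemma rename_eq_self {f : ℕ → ℕ} (φ : Form) (h : ∀ x ∈ φ.vars, f x = x) : φ.rename f = φ :=
  (φ.rename_congr (g := id) h).trans φ.rename_id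

lemma vars_rename (f : ℕ → ℕ) (φ : Form) : (φ.rename f).vars = f '' φ.vars := by
  induction φ <;> simp_all [rename, vars, Set.image_union]

lemma sat_rename (f : ℕ → ℕ) (v : ℕ → Bool) (φ : Form) :
    (φ.rename f).sat v ↔ φ.sat (v ∘ f) := by
  induction φ <;> simp_all [rename, sat]

lemma sat_congr {v w : ℕ → Bool} (φ : Form) (h : ∀ x ∈ φ.vars, v x = w x) :
    φ.sat v ↔ φ.sat w := by
  induction φ <;> simp_all [sat, vars]

lemma vars_finite (φ : Form) : φ.vars.Finite := by
  induction φ <;> simp_all [vars]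

end Form

/-- `levOf lt x` is the supremum of this set. -/
def chainLengths (lt : ℕ → ℕ → Prop) (x : ℕ) : Set ℕ :=
  {n | ∃ c : ℕ → ℕ, c n = x ∧ ∀ i < n, lt (c i) (c (i + 1))}

lemma zero_mem_chainLengths (lt : ℕ → ℕ → Prop) (x : ℕ) : 0 ∈ chainLengths lt x :=
  ⟨fun _ => x, rfl, fun _ h => absurd h (Nat.not_lt_zero _)⟩

lemma succ_mem_chainLengths {lt : ℕ → ℕ → Prop} {x y n : ℕ} (hn : n ∈ chainLengths lt x)
    (hxy : lt x y) : n + 1 ∈ chainLengths lt y := by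
  obtain ⟨c, hcn, hc⟩ := hn
  refine ⟨fun i => if i ≤ n then c i else y, by simp, fun i hi => ?_⟩
  rcases Nat.lt_or_ge i n with h | h
  · simpa [h.le, Nat.succ_le_of_lt h] using hc i h
  · obtain rfl : i = n := by omega
    simpa [hcn] using hxy

lemma chainLengths_map_eq {r s : ℕ → ℕ → Prop} {f : ℕ → ℕ} {X : Set ℕ}
    (hfwd : ∀ a b, r a b → s (f a) (f b))
    (hback : ∀ a b, b ∈ X → s a (f b) → ∃ a' ∈ X, f a' = a ∧ r a' b) {x : ℕ} (hx : x ∈ X) :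
    chainLengths s (f x) = chainLengths r x := by
  ext n
  constructor
  · induction n generalizing x with
    | zero => exact fun _ => zero_mem_chainLengths r x
    | succ n ih =>
      rintro ⟨c, hcn, hc⟩
      obtain ⟨a, ha, hfa, hax⟩ := hback (c n) x hx (hcn ▸ hc n n.lt_succ_self)
      exact succ_mem_chainLengths (ih ha ⟨c, hfa.symm, fun i hi => hc i (by omega)⟩) hax
  · rintro ⟨c, hcn, hc⟩
    exact ⟨f ∘ c, by simp [hcn], fun i hi => hfwd _ _ (hc i hi)⟩

lemma levOf_map_eq {r s : ℕ → ℕ → Prop} {f : ℕ → ℕ} {X : Set ℕ}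
    (hfwd : ∀ a b, r a b → s (f a) (f b))
    (hback : ∀ a b, b ∈ X → s a (f b) → ∃ a' ∈ X, f a' = a ∧ r a' b) {x : ℕ} (hx : x ∈ X) :
    levOf s (f x) = levOf r x :=
  congrArg sSup (chainLengths_map_eq hfwd hback hx)

lemma Set.Finite.map_le_of_mapsTo_injOn {α β : Type*} [Preorder β] {s : Set α} (hs : s.Finite)
    {f : α → α} (hmaps : Set.MapsTo f s s) (hinj : Set.InjOn f s) {g : α → β}
    (hg : ∀ x ∈ s, g x ≤ g (f x)) {x : α} (hx : x ∈ s) : g (f x) ≤ g x := by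
  let t := {y ∈ s | g (f x) ≤ g y}
  have htt : Set.MapsTo f t t := fun y hy => ⟨hmaps hy.1, hy.2.trans (hg y hy.1)⟩
  obtain ⟨y, hy, hyx⟩ := ((hs.subset (Set.sep_subset _ _)).injOn_iff_bijOn_of_mapsTo htt).mp
    (hinj.mono (Set.sep_subset _ _)) |>.surjOn ⟨hmaps hx, le_rfl⟩
  exact hinj hy.1 hx hyx ▸ hy.2

lemma Set.InjOn.exists_injOn_leftInvOn {α β : Type*} [Nonempty α] {s : Set α} {t : Set β}
    {φ : α → β} {pad : β → α} (hφ : Set.InjOn φ s) (hpad : Set.InjOn pad (t \ φ '' s))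
    (hout : Set.MapsTo pad (t \ φ '' s) sᶜ) : ∃ q, Set.InjOn q t ∧ ∀ x ∈ s, q (φ x) = x := by
  classical
  refine ⟨(φ '' s).piecewise (Function.invFunOn φ s) pad, fun a ha b hb hab => ?_,
    fun x hx => by simp [Set.mem_image_of_mem φ hx, hφ.leftInvOn_invFunOn hx]⟩
  by_cases ha' : a ∈ φ '' s <;> by_cases hb' : b ∈ φ '' s <;>
    simp only [Set.piecewise, ha', hb', if_true, if_false] at hab
  · obtain ⟨x, hx, rfl⟩ := ha'
    obtain ⟨y, hy, rfl⟩ := hb'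
    rw [hφ.leftInvOn_invFunOn hx, hφ.leftInvOn_invFunOn hy] at hab
    rw [hab]
  · exact absurd (hab ▸ Function.invFunOn_mem ha') (hout ⟨hb, hb'⟩)
  · exact absurd (hab ▸ Function.invFunOn_mem hb') (hout ⟨ha, ha'⟩)
  · exact hpad ⟨ha, ha'⟩ ⟨hb, hb'⟩ hab

namespace Ultrafilter

variable {ι α β : Type*} (U : Ultrafilter ι)

lemma exists_eventually_rel_of_directed [Nonempty ι] (r : ι → ι → Prop) (hrefl : ∀ i, r i i)
    (htrans : ∀ i j k, r i j → r j k → r i k) (hdir : ∀ i j, ∃ k, r i k ∧ r j k) :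
    ∃ U : Ultrafilter ι, ∀ i, ∀ᶠ j in U, r i j := by
  have : (⨅ i, Filter.principal {j | r i j}).NeBot := by
    refine Filter.iInf_neBot_of_directed' (fun i j => ?_) fun i => ?_
    · obtain ⟨k, hik, hjk⟩ := hdir i j
      exact ⟨k, Filter.principal_mono.mpr fun l hl => htrans i k l hik hl,
        Filter.principal_mono.mpr fun l hl => htrans j k l hjk hl⟩
    · exact Filter.principal_neBot_iff.mpr ⟨i, hrefl i⟩
  exact ⟨.of _, fun i =>
    Ultrafilter.of_le _ (Filter.mem_iInf_of_mem i (Filter.mem_principal_self _))⟩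

lemma exists_limit [Nonempty β] {X : Set α} {f : ι → α → β} {T : α → Set β}
    (hT : ∀ a ∈ X, (T a).Finite) (h : ∀ a ∈ X, ∀ᶠ i in U, f i a ∈ T a) :
    ∃ F : α → β, ∀ a ∈ X, F a ∈ T a ∧ ∀ᶠ i in U, f i a = F a := by
  have : ∀ a, ∃ b, a ∈ X → b ∈ T a ∧ ∀ᶠ i in U, f i a = b := fun a => by
    by_cases ha : a ∈ X
    · obtain ⟨b, hb, hev⟩ := (U.eventually_exists_mem_iff (P := fun b i => f i a = b) (hT a ha)).mp
        ((h a ha).mono fun i hi => ⟨f i a, hi, rfl⟩)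
      exact ⟨b, fun _ => ⟨hb, hev⟩⟩
    · exact ⟨Classical.arbitrary β, fun h => absurd h ha⟩
  choose F hF using this
  exact ⟨F, fun a ha => hF a ha⟩

lemma exists_limit_eq {X T : Set α} {f : ι → α → β} {F : α → β}
    (hF : ∀ a ∈ X, ∀ᶠ i in U, f i a = F a) (hT : T.Finite) (hTX : T ⊆ X) {w : β}
    (h : ∀ᶠ i in U, ∃ a ∈ T, f i a = w) : ∃ a ∈ T, F a = w := by
  obtain ⟨a, ha, hev⟩ := (U.eventually_exists_mem_iff hT).mp h
  obtain ⟨i, hiw, hiF⟩ := (hev.and (hF a (hTX ha))).exists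
  exact ⟨a, ha, hiF.symm.trans hiw⟩

end Ultrafilter

namespace LPOF

section

variable (α : LPOF L)

lemma chain_lt {c : ℕ → ℕ} {n : ℕ} (hc : ∀ i < n, α.lt (c i) (c (i + 1))) {i j : ℕ}
    (hij : i < j) (hjn : j ≤ n) : α.lt (c i) (c j) := by
  induction hij with
  | refl => exact hc i hjn
  | step _ ih => exact α.lt_trans (ih (by omega)) (hc _ hjn)

lemma bddAbove_chainLengths (x : ℕ) : BddAbove (chainLengths α.lt x) := by
  refine ⟨(α.finPred x).toFinset.card, ?_⟩
  rintro n ⟨c, hcn, hc⟩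
  have hinj : Set.InjOn c (Set.Iio n) := by
    intro i hi j hj hij
    by_contra hne
    rcases Nat.lt_or_gt_of_ne hne with h | h
    · exact α.lt_irrefl (c j) (by simpa [hij] using α.chain_lt hc h (le_of_lt hj))
    · exact α.lt_irrefl (c i) (by simpa [hij] using α.chain_lt hc h (le_of_lt hi))
  have hmaps : ∀ i ∈ Set.Iio n, c i ∈ {y | α.lt y x} :=
    fun i hi => hcn ▸ α.chain_lt hc hi le_rfl
  simpa [Set.ncard_eq_toFinset_card _ (α.finPred x)] using
    Set.ncard_le_ncard_of_injOn c hmaps hinj (α.finPred x)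

lemma levOf_mem_chainLengths (x : ℕ) : levOf α.lt x ∈ chainLengths α.lt x :=
  Nat.sSup_mem ⟨0, zero_mem_chainLengths _ x⟩ (α.bddAbove_chainLengths x)

lemma le_levOf {x n : ℕ} (h : n ∈ chainLengths α.lt x) : n ≤ levOf α.lt x :=
  le_csSup (α.bddAbove_chainLengths x) h

variable {α} in
lemma levOf_lt_levOf {x y : ℕ} (h : α.lt x y) : levOf α.lt x < levOf α.lt y :=
  α.le_levOf (succ_mem_chainLengths (α.levOf_mem_chainLengths x) h)

lemma exists_lt_levOf_eq_pred {x : ℕ} (h : 0 < levOf α.lt x) :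
    ∃ z, α.lt z x ∧ levOf α.lt z = levOf α.lt x - 1 := by
  obtain ⟨c, hcn, hc⟩ := α.levOf_mem_chainLengths x
  set m := levOf α.lt x
  have hlt : α.lt (c (m - 1)) x := hcn ▸ α.chain_lt hc (by omega) le_rfl
  have hge : m - 1 ≤ levOf α.lt (c (m - 1)) :=
    α.le_levOf ⟨c, rfl, fun i hi => hc i (by omega)⟩
  exact ⟨c (m - 1), hlt, by have := levOf_lt_levOf hlt; omega⟩

lemma exists_lt_levOf_eq {x n : ℕ} (h : n < levOf α.lt x) :
    ∃ z, α.lt z x ∧ levOf α.lt z = n := by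
  obtain ⟨z, hzx, hz⟩ := α.exists_lt_levOf_eq_pred (x := x) (by omega)
  by_cases hzn : levOf α.lt z = n
  · exact ⟨z, hzx, hzn⟩
  · obtain ⟨y, hyz, hy⟩ := exists_lt_levOf_eq (x := z) (n := n) (by omega)
    exact ⟨y, α.lt_trans hyz hzx, hy⟩
termination_by levOf α.lt x - n

lemma lt_wellFounded : WellFounded α.lt :=
  Subrelation.wf (fun h => levOf_lt_levOf h) (measure (levOf α.lt)).wf

def level (k : ℕ) : Set ℕ := {x ∈ α.N | levOf α.lt x = k}

lemma finite_levOf_le (k : ℕ) : {x ∈ α.N | levOf α.lt x ≤ k}.Finite :=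
  ((Set.finite_Iic k).biUnion fun j _ => α.finLevel j).subset
    fun _ hx => Set.mem_biUnion (Set.mem_Iic.mpr hx.2) ⟨hx.1, rfl⟩

noncomputable def root : ℕ := α.singleRoot.choose

lemma root_mem : α.root ∈ α.N := α.singleRoot.choose_spec.1.1

lemma not_lt_root (y : ℕ) : ¬ α.lt y α.root := α.singleRoot.choose_spec.1.2 y

variable {α}

lemma eq_root {x : ℕ} (hx : x ∈ α.N) (h : ∀ y, ¬ α.lt y x) : x = α.root :=
  α.singleRoot.choose_spec.2 x ⟨hx, h⟩

lemma eq_root_or_root_lt {x : ℕ} (hx : x ∈ α.N) : x = α.root ∨ α.lt α.root x := by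
  induction x using α.lt_wellFounded.induction with
  | _ x ih =>
    by_cases h : ∃ y, α.lt y x
    · obtain ⟨y, hy⟩ := h
      rcases ih y hy (α.lt_mem hy).1 with rfl | h'
      · exact Or.inr hy
      · exact Or.inr (α.lt_trans h' hy)
    · exact Or.inl (eq_root hx (not_exists.mp h))

lemma levOf_root : levOf α.lt α.root = 0 := by
  by_contra h
  obtain ⟨z, hz, -⟩ := α.exists_lt_levOf_eq_pred (Nat.pos_of_ne_zero h)
  exact α.not_lt_root z hz

lemma succs_subset_N {x : ℕ} : α.succs x ⊆ α.N := fun _ h => (α.lt_mem h.1).2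

lemma Bot_subset_N : α.Bot ⊆ α.N := fun _ h => h.1

lemma not_lt_of_mem_Bot {x : ℕ} (h : x ∈ α.Bot) (y : ℕ) : ¬ α.lt x y :=
  α.bot_maximal x h.1 h.2 y

lemma succPlus_Bot : α.succPlus α.Bot = ∅ :=
  Set.eq_empty_of_forall_notMem fun _ ⟨_, hz, hlt⟩ => not_lt_of_mem_Bot hz _ hlt

lemma succPlus_empty : α.succPlus ∅ = ∅ := by simp [succPlus]

lemma exists_mem_succs {w y : ℕ} (h : α.lt y w) : ∃ v, w ∈ α.succs v := by
  obtain ⟨v, hv, hvmax⟩ := Set.Finite.exists_maximalFor (levOf α.lt) _ (α.finPred w) ⟨y, h⟩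
  refine ⟨v, hv, fun ⟨z, hvz, hzw⟩ => ?_⟩
  have := hvmax (j := z) hzw (levOf_lt_levOf hvz).le
  have := levOf_lt_levOf hvz
  omega

lemma vars_subset_N {x : ℕ} (hx : x ∈ α.N) : (α.form x).vars ⊆ α.N :=
  fun y hy => (α.lt_mem (α.form_free x hx y hy)).1

end

/-- `LPOF.le` up to renaming the nodes of `α` along `f`. -/
structure PrefixEmb (α γ : LPOF L) (f : ℕ → ℕ) : Prop where
  injOn : Set.InjOn f α.N
  mapsTo : Set.MapsTo f α.N γ.N
  lt_iff : ∀ x ∈ α.N, ∀ y ∈ α.N, α.lt x y ↔ γ.lt (f x) (f y)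
  exists_eq_of_lt : ∀ x ∈ α.N, ∀ w, γ.lt w (f x) → ∃ u ∈ α.N, f u = w
  lab_le : ∀ x ∈ α.N, α.lab x ≤ γ.lab (f x)
  form_eq : ∀ x ∈ α.N, γ.form (f x) = (α.form x).rename f
  image_succs : ∀ x ∈ α.N, f '' α.succs x = γ.succs (f x) \ γ.succPlus (f '' α.Bot)

namespace PrefixEmb

variable {α β γ : LPOF L} {f g : ℕ → ℕ}

lemma levOf_eq (hf : PrefixEmb α γ f) {x : ℕ} (hx : x ∈ α.N) :
    levOf γ.lt (f x) = levOf α.lt x := by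
  refine levOf_map_eq (X := α.N) (fun a b hab => ?_) (fun a b hb hab => ?_) hx
  · exact (hf.lt_iff a (α.lt_mem hab).1 b (α.lt_mem hab).2).mp hab
  · obtain ⟨u, hu, rfl⟩ := hf.exists_eq_of_lt b hb a hab
    exact ⟨u, hu, rfl, (hf.lt_iff u hu b hb).mpr hab⟩

lemma map_root (hf : PrefixEmb α γ f) : f α.root = γ.root := by
  refine eq_root (hf.mapsTo α.root_mem) fun w hw => ?_
  obtain ⟨u, hu, rfl⟩ := hf.exists_eq_of_lt _ α.root_mem w hw
  exact α.not_lt_root u ((hf.lt_iff _ hu _ α.root_mem).mpr hw)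

lemma exists_Bot_lt_of_notMem_image (hf : PrefixEmb α γ f) {w : ℕ} (hw : w ∈ γ.N)
    (hnot : w ∉ f '' α.N) : ∃ z ∈ α.Bot, γ.lt (f z) w := by
  induction w using γ.lt_wellFounded.induction with
  | _ w ih =>
    by_cases hpred : ∃ y, γ.lt y w
    · obtain ⟨v, hv⟩ := γ.exists_mem_succs hpred.choose_spec
      by_cases hvim : v ∈ f '' α.N
      · obtain ⟨u, hu, rfl⟩ := hvim
        have hw' : w ∉ f '' α.succs u := fun ⟨s, hs, hsw⟩ => hnot ⟨s, succs_subset_N hs, hsw⟩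
        rw [hf.image_succs u hu] at hw'
        obtain ⟨_, ⟨z, hz, rfl⟩, hzw⟩ := not_not.mp fun h => hw' ⟨hv, h⟩
        exact ⟨z, hz, hzw⟩
      · obtain ⟨z, hz, hzv⟩ := ih v hv.1 (γ.lt_mem hv.1).1 hvim
        exact ⟨z, hz, γ.lt_trans hzv hv.1⟩
    · rw [eq_root hw (not_exists.mp hpred), ← hf.map_root] at hnot
      exact absurd ⟨α.root, α.root_mem, rfl⟩ hnot

lemma comp (hf : PrefixEmb α β f) (hg : PrefixEmb β γ g) : PrefixEmb α γ (g ∘ f) where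
  injOn := hg.injOn.comp hf.injOn hf.mapsTo
  mapsTo := hg.mapsTo.comp hf.mapsTo
  lt_iff x hx y hy := (hf.lt_iff x hx y hy).trans (hg.lt_iff _ (hf.mapsTo hx) _ (hf.mapsTo hy))
  exists_eq_of_lt x hx w hw := by
    obtain ⟨v, hv, rfl⟩ := hg.exists_eq_of_lt _ (hf.mapsTo hx) w hw
    obtain ⟨u, hu, rfl⟩ :=
      hf.exists_eq_of_lt x hx v ((hg.lt_iff _ hv _ (hf.mapsTo hx)).mpr hw)
    exact ⟨u, hu, rfl⟩
  lab_le x hx := (hf.lab_le x hx).trans (hg.lab_le _ (hf.mapsTo hx))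
  form_eq x hx := by
    rw [Function.comp_apply, hg.form_eq _ (hf.mapsTo hx), hf.form_eq x hx, Form.rename_comp]
  image_succs x hx := by
    have hA := hf.image_succs x hx
    have hB := hg.image_succs _ (hf.mapsTo hx)
    ext w
    constructor
    · rintro ⟨y, hy, rfl⟩
      have hyN : y ∈ α.N := succs_subset_N hy
      have h1 : f y ∈ β.succs (f x) \ β.succPlus (f '' α.Bot) := hA ▸ ⟨y, hy, rfl⟩
      have h2 : g (f y) ∈ γ.succs (g (f x)) \ γ.succPlus (g '' β.Bot) := hB ▸ ⟨f y, h1.1, rfl⟩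
      refine ⟨h2.1, ?_⟩
      rintro ⟨_, ⟨z, hz, rfl⟩, hzy⟩
      exact h1.2 ⟨f z, ⟨z, hz, rfl⟩,
        (hg.lt_iff _ (hf.mapsTo (Bot_subset_N hz)) _ (hf.mapsTo hyN)).mpr hzy⟩
    · rintro ⟨hw, hwα⟩
      have hwβ : w ∉ γ.succPlus (g '' β.Bot) := by
        rintro ⟨_, ⟨z, hz, rfl⟩, hzw⟩
        by_cases hzim : z ∈ f '' α.N
        · obtain ⟨u, hu, rfl⟩ := hzim
          have : α.lab u = ⊥ := le_bot_iff.mp (hz.2 ▸ hf.lab_le u hu)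
          exact hwα ⟨g (f u), ⟨u, ⟨hu, this⟩, rfl⟩, hzw⟩
        · obtain ⟨b, hb, hbz⟩ := hf.exists_Bot_lt_of_notMem_image (Bot_subset_N hz) hzim
          have := (hg.lt_iff _ (hf.mapsTo (Bot_subset_N hb)) _ (Bot_subset_N hz)).mp hbz
          exact hwα ⟨g (f b), ⟨b, hb, rfl⟩, γ.lt_trans this hzw⟩
      obtain ⟨v, hv, rfl⟩ : w ∈ g '' β.succs (f x) := hB ▸ ⟨hw, hwβ⟩
      have hvα : v ∉ β.succPlus (f '' α.Bot) := by
        rintro ⟨_, ⟨b, hb, rfl⟩, hbv⟩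
        exact hwα ⟨g (f b), ⟨b, hb, rfl⟩,
          (hg.lt_iff _ (hf.mapsTo (Bot_subset_N hb)) _ (succs_subset_N hv)).mp hbv⟩
      obtain ⟨u, hu, rfl⟩ : v ∈ f '' α.succs x := hA ▸ ⟨hv, hvα⟩
      exact ⟨u, hu, rfl⟩

lemma le (hf : PrefixEmb α γ id) : α.le γ := by
  refine ⟨hf.mapsTo, fun x hx w hw => ?_, fun x y => ?_, hf.lab_le, fun x hx => ?_,
    fun x hx => by simpa using hf.image_succs x hx⟩
  · obtain ⟨u, hu, rfl⟩ := hf.exists_eq_of_lt x hx w hw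
    exact hu
  · refine ⟨fun h => ?_, fun ⟨h, hx, hy⟩ => (hf.lt_iff x hx y hy).mpr h⟩
    exact ⟨(hf.lt_iff x (α.lt_mem h).1 y (α.lt_mem h).2).mp h, α.lt_mem h⟩
  · simpa [Form.rename_id] using (hf.form_eq x hx).symm

end PrefixEmb

namespace le

variable {α γ : LPOF L}

lemma prefixEmb (h : α.le γ) : PrefixEmb α γ id where
  injOn := Set.injOn_id _
  mapsTo := h.1
  lt_iff x hx y hy := by simpa [hx, hy] using h.2.2.1 x y
  exists_eq_of_lt x hx w hw := ⟨w, h.2.1 x hx w hw, rfl⟩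
  lab_le := h.2.2.2.1
  form_eq x hx := by simpa [Form.rename_id] using (h.2.2.2.2.1 x hx).symm
  image_succs x hx := by simpa using h.2.2.2.2.2 x hx

lemma refl (α : LPOF L) : α.le α :=
  ⟨subset_rfl, fun _ _ y hy => (α.lt_mem hy).1, fun _ _ => ⟨fun h => ⟨h, α.lt_mem h⟩, And.left⟩,
    fun _ _ => le_rfl, fun _ _ => rfl, fun _ _ => by rw [succPlus_Bot, Set.sdiff_empty]⟩

lemma levOf_eq (h : α.le γ) {x : ℕ} (hx : x ∈ α.N) : levOf α.lt x = levOf γ.lt x :=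
  (h.prefixEmb.levOf_eq hx).symm

end le

section

variable {α β γ : LPOF L}

lemma PrefixEmb.congr {f g : ℕ → ℕ} (hf : PrefixEmb α γ f) (h : Set.EqOn f g α.N) :
    PrefixEmb α γ g where
  injOn := hf.injOn.congr h
  mapsTo := hf.mapsTo.congr h
  lt_iff x hx y hy := by rw [← h hx, ← h hy]; exact hf.lt_iff x hx y hy
  exists_eq_of_lt x hx w hw := by
    obtain ⟨u, hu, rfl⟩ := hf.exists_eq_of_lt x hx w (h hx ▸ hw)
    exact ⟨u, hu, (h hu).symm⟩
  lab_le x hx := h hx ▸ hf.lab_le x hx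
  form_eq x hx := by
    rw [← h hx, hf.form_eq x hx]
    exact Form.rename_congr _ fun y hy => h (α.vars_subset_N hx hy)
  image_succs x hx := by
    rw [← h hx, ← (h.mono succs_subset_N).image_eq, ← (h.mono Bot_subset_N).image_eq]
    exact hf.image_succs x hx

/-- The body of `LPOF.iso`, with the bijection `f` made explicit. -/
def IsIso (α β : LPOF L) (f : ℕ → ℕ) : Prop :=
  Set.BijOn f α.N β.N ∧
    (∀ x ∈ α.N, ∀ y ∈ α.N, (α.lt x y ↔ β.lt (f x) (f y))) ∧
    (∀ x ∈ α.N, β.lab (f x) = α.lab x) ∧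
    (∀ x ∈ α.N, β.form (f x) = (α.form x).rename f)

namespace IsIso

variable {f g : ℕ → ℕ}

lemma symm (h : IsIso α β f) : IsIso β α (Function.invFunOn f α.N) := by
  obtain ⟨hbij, hlt, hlab, hform⟩ := h
  have hinv : Set.InvOn (Function.invFunOn f α.N) f α.N β.N := hbij.invOn_invFunOn
  have hbij' := hbij.symm hinv.symm
  refine ⟨hbij', fun x hx y hy => ?_, fun y hy => ?_, fun y hy => ?_⟩
  · simpa [hinv.2 hx, hinv.2 hy] using (hlt _ (hbij'.mapsTo hx) _ (hbij'.mapsTo hy)).symm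
  · simpa [hinv.2 hy] using (hlab _ (hbij'.mapsTo hy)).symm
  · have hu := hbij'.mapsTo hy
    rw [← hinv.2 hy, hform _ hu, Form.rename_comp, hinv.2 hy]
    exact (Form.rename_eq_self _ fun v hv => hinv.1 (α.vars_subset_N hu hv)).symm

lemma trans (h₁ : IsIso α β f) (h₂ : IsIso β γ g) : IsIso α γ (g ∘ f) := by
  obtain ⟨hbf, hltf, hlabf, hformf⟩ := h₁
  obtain ⟨hbg, hltg, hlabg, hformg⟩ := h₂
  refine ⟨hbg.comp hbf, fun x hx y hy => ?_, fun x hx => ?_, fun x hx => ?_⟩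
  · exact (hltf x hx y hy).trans (hltg _ (hbf.mapsTo hx) _ (hbf.mapsTo hy))
  · rw [Function.comp_apply, hlabg _ (hbf.mapsTo hx), hlabf _ hx]
  · rw [Function.comp_apply, hformg _ (hbf.mapsTo hx), hformf _ hx, Form.rename_comp]

lemma prefixEmb (h : IsIso α β f) : PrefixEmb α β f := by
  obtain ⟨hbij, hlt, hlab, hform⟩ := h
  refine ⟨hbij.injOn, hbij.mapsTo, hlt, fun x hx w hw => hbij.surjOn (β.lt_mem hw).1,
    fun x hx => (hlab x hx).ge, hform, fun x hx => ?_⟩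
  ext w
  constructor
  · rintro ⟨y, hy, rfl⟩
    have hyN := succs_subset_N hy
    refine ⟨⟨(hlt x hx y hyN).mp hy.1, ?_⟩, ?_⟩
    · rintro ⟨_, hz1, hz2⟩
      obtain ⟨z, hz, rfl⟩ := hbij.surjOn (β.lt_mem hz1).2
      exact hy.2 ⟨z, (hlt x hx z hz).mpr hz1, (hlt z hz y hyN).mpr hz2⟩
    · rintro ⟨_, ⟨z, hz, rfl⟩, hzy⟩
      exact not_lt_of_mem_Bot hz y ((hlt z (Bot_subset_N hz) y hyN).mpr hzy)
  · rintro ⟨hw, -⟩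
    obtain ⟨y, hy, rfl⟩ := hbij.surjOn (succs_subset_N hw)
    refine ⟨y, ⟨(hlt x hx y hy).mpr hw.1, ?_⟩, rfl⟩
    rintro ⟨z, hxz, hzy⟩
    have hz := (α.lt_mem hxz).2
    exact hw.2 ⟨f z, (hlt x hx z hz).mp hxz, (hlt z hz y hy).mp hzy⟩

end IsIso

lemma iso_refl (α : LPOF L) : α.iso α :=
  ⟨id, Set.bijOn_id _, fun _ _ _ _ => Iff.rfl, fun _ _ => rfl,
    fun _ _ => (Form.rename_id _).symm⟩

lemma iso.symm (h : α.iso β) : β.iso α := let ⟨_, h⟩ := h; ⟨_, IsIso.symm h⟩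

lemma iso.trans (h₁ : α.iso β) (h₂ : β.iso γ) : α.iso γ :=
  let ⟨_, h₁⟩ := h₁; let ⟨_, h₂⟩ := h₂; ⟨_, IsIso.trans h₁ h₂⟩

lemma iso.finite (h : α.iso β) (hα : α.N.Finite) : β.N.Finite := by
  obtain ⟨f, hbij, -⟩ := h
  exact hbij.image_eq ▸ hα.image f

lemma iso.exists_prefixEmb (h : α.iso β) : ∃ f, PrefixEmb α β f ∧ Set.SurjOn f α.N β.N :=
  let ⟨f, h⟩ := h; ⟨f, IsIso.prefixEmb h, h.1.surjOn⟩

lemma mem_isoClass_iff_isoClass_eq (h : β ∈ isoClass α) : isoClass β = isoClass α :=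
  Set.ext fun _ => ⟨fun hg => iso.trans h hg, fun hg => iso.trans h.symm hg⟩

def toPom (α : LPOF L) : Pom L := ⟨isoClass α, α, rfl⟩

lemma mem_toPom (α : LPOF L) : α ∈ α.toPom.1 := iso_refl α

lemma _root_.Pom.eq_toPom {A : Pom L} (h : α ∈ A.1) : A = α.toPom := by
  obtain ⟨_, β, rfl⟩ := A
  exact Subtype.ext (mem_isoClass_iff_isoClass_eq h).symm

lemma _root_.Pom.exists_mem (A : Pom L) : ∃ α, α ∈ A.1 := by
  obtain ⟨β, hβ⟩ := A.2
  exact ⟨β, hβ ▸ iso_refl β⟩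

lemma _root_.Pom.iso_of_mem {A : Pom L} (hα : α ∈ A.1) (hβ : β ∈ A.1) : α.iso β := by
  obtain ⟨_, δ, rfl⟩ := A
  exact iso.trans (iso.symm hα) hβ

end

section

variable {α β γ : LPOF L}

noncomputable def rename (α : LPOF L) (q : ℕ → ℕ) (hq : Set.InjOn q α.N) : LPOF L :=
  open Classical in
  { N := q '' α.N
    lt := fun x y => ∃ a b, α.lt a b ∧ q a = x ∧ q b = y
    lab := fun x => if x ∈ q '' α.N then α.lab (Function.invFunOn q α.N x) else ⊥
    form := fun x =>
      if x ∈ q '' α.N then (α.form (Function.invFunOn q α.N x)).rename q else .top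
    lt_mem := by
      rintro _ _ ⟨a, b, hab, rfl, rfl⟩
      exact ⟨⟨a, (α.lt_mem hab).1, rfl⟩, ⟨b, (α.lt_mem hab).2, rfl⟩⟩
    lt_trans := by
      rintro _ _ _ ⟨a, b, hab, rfl, rfl⟩ ⟨b', c, hbc, hb, rfl⟩
      obtain rfl := hq (α.lt_mem hbc).1 (α.lt_mem hab).2 hb
      exact ⟨a, c, α.lt_trans hab hbc, rfl, rfl⟩
    lt_irrefl := by
      rintro _ ⟨a, b, hab, rfl, hb⟩
      obtain rfl := hq (α.lt_mem hab).2 (α.lt_mem hab).1 hb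
      exact α.lt_irrefl _ hab
    finPred := fun x => by
      by_cases hx : x ∈ q '' α.N
      · obtain ⟨b, hb, rfl⟩ := hx
        refine ((α.finPred b).image q).subset ?_
        rintro _ ⟨a, b', hab, rfl, hb'⟩
        obtain rfl := hq (α.lt_mem hab).2 hb hb'
        exact ⟨a, hab, rfl⟩
      · refine Set.finite_empty.subset ?_
        rintro _ ⟨a, b, hab, rfl, rfl⟩
        exact hx ⟨b, (α.lt_mem hab).2, rfl⟩
    finLevel := fun n => by
      refine ((α.finLevel n).image q).subset ?_
      rintro _ ⟨⟨a, ha, rfl⟩, hlev⟩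
      refine ⟨a, ⟨ha, ?_⟩, rfl⟩
      rwa [levOf_map_eq (X := α.N) (fun a b hab => ⟨a, b, hab, rfl, rfl⟩) ?_ ha] at hlev
      rintro _ b hb ⟨a, b', hab, rfl, hb'⟩
      obtain rfl := hq (α.lt_mem hab).2 hb hb'
      exact ⟨a, (α.lt_mem hab).1, rfl, hab⟩
    singleRoot := by
      refine ⟨q α.root, ⟨⟨α.root, α.root_mem, rfl⟩, ?_⟩, ?_⟩
      · rintro _ ⟨a, b, hab, rfl, hb⟩
        obtain rfl := hq (α.lt_mem hab).2 α.root_mem hb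
        exact α.not_lt_root a hab
      · rintro _ ⟨⟨a, ha, rfl⟩, hmin⟩
        rw [eq_root ha fun y hy => hmin (q y) ⟨y, a, hy, rfl, rfl⟩]
    bot_maximal := by
      rintro _ ⟨a, ha, rfl⟩ hbot _ ⟨a', b, hab, ha', rfl⟩
      rw [if_pos ⟨a, ha, rfl⟩, hq.leftInvOn_invFunOn ha] at hbot
      obtain rfl := hq (α.lt_mem hab).1 ha ha'
      exact α.bot_maximal a' ha hbot b hab
    form_sat := by
      rintro _ ⟨a, ha, rfl⟩
      obtain ⟨v, hv⟩ := α.form_sat a ha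
      refine ⟨v ∘ Function.invFunOn q α.N, ?_⟩
      rw [if_pos ⟨a, ha, rfl⟩, hq.leftInvOn_invFunOn ha, Form.sat_rename]
      refine (Form.sat_congr _ fun y hy => ?_).mpr hv
      simp [hq.leftInvOn_invFunOn (α.vars_subset_N ha hy)]
    form_free := by
      rintro _ ⟨a, ha, rfl⟩ _ hy
      rw [if_pos ⟨a, ha, rfl⟩, hq.leftInvOn_invFunOn ha, Form.vars_rename] at hy
      obtain ⟨z, hz, rfl⟩ := hy
      exact ⟨z, a, α.form_free a ha z hz, rfl, rfl⟩
    form_impl := by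
      rintro _ _ ⟨a, b, hab, rfl, rfl⟩ v hv
      have ha := (α.lt_mem hab).1
      have hb := (α.lt_mem hab).2
      rw [if_pos ⟨b, hb, rfl⟩, hq.leftInvOn_invFunOn hb, Form.sat_rename] at hv
      rw [if_pos ⟨a, ha, rfl⟩, hq.leftInvOn_invFunOn ha, Form.sat_rename]
      exact α.form_impl hab _ hv
    lab_junk := fun _ hx => if_neg hx
    form_junk := fun _ hx => if_neg hx }

lemma isIso_rename (α : LPOF L) {q : ℕ → ℕ} (hq : Set.InjOn q α.N) :
    IsIso α (α.rename q hq) q := by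
  classical
  refine ⟨hq.bijOn_image, fun x hx y hy => ⟨fun h => ⟨x, y, h, rfl, rfl⟩, ?_⟩,
    fun x hx => ?_, fun x hx => ?_⟩
  · rintro ⟨a, b, hab, ha, hb⟩
    rwa [← hq (α.lt_mem hab).1 hx ha, ← hq (α.lt_mem hab).2 hy hb]
  · exact (if_pos ⟨x, hx, rfl⟩).trans (congrArg α.lab (hq.leftInvOn_invFunOn hx))
  · exact (if_pos ⟨x, hx, rfl⟩).trans (congrArg (Form.rename q ∘ α.form)
      (hq.leftInvOn_invFunOn hx))

lemma rename_mem {A : Pom L} (hα : α ∈ A.1) {q : ℕ → ℕ} (hq : Set.InjOn q α.N) :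
    α.rename q hq ∈ A.1 :=
  Pom.eq_toPom hα ▸ ⟨q, isIso_rename α hq⟩

lemma PrefixEmb.rename_le {f : ℕ → ℕ} (hf : PrefixEmb α γ f) : (α.rename f hf.injOn).le γ := by
  refine (((isIso_rename α hf.injOn).symm.prefixEmb.comp hf).congr ?_).le
  rintro _ ⟨a, ha, rfl⟩
  simp [hf.injOn.leftInvOn_invFunOn ha]

/-- Each representative of `A` has to leave room for the nodes of `γ` outside the image of `f`,
which `room` guarantees. -/
lemma pomLe_of_prefixEmb {A B : Pom L} (hα : α ∈ A.1) (hγ : γ ∈ B.1) {f : ℕ → ℕ}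
    (hf : PrefixEmb α γ f) (room : α.N.Finite ∨ Set.SurjOn f α.N γ.N) : pomLe A B := by
  rw [Pom.eq_toPom hα, Pom.eq_toPom hγ]
  rintro α' (hα' : α.iso α')
  obtain ⟨e, he, hsurj⟩ := hα'.symm.exists_prefixEmb
  have hφ := he.comp hf
  obtain ⟨q, hq, hqφ⟩ : ∃ q, Set.InjOn q γ.N ∧ ∀ x ∈ α'.N, q ((f ∘ e) x) = x := by
    rcases room with hfin | hsurj'
    · let emb := Set.Infinite.natEmbedding _ (hα'.finite hfin).infinite_compl
      exact hφ.injOn.exists_injOn_leftInvOn (pad := fun w => emb w)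
        (fun _ _ _ _ h => emb.injective (Subtype.ext h)) fun w _ => (emb w).2
    · have hempty : γ.N \ (f ∘ e) '' α'.N = ∅ :=
        Set.sdiff_eq_empty.mpr (hsurj'.comp hsurj)
      exact hφ.injOn.exists_injOn_leftInvOn (pad := id) (hempty ▸ Set.injOn_empty _)
        (hempty ▸ Set.mapsTo_empty _ _)
  exact ⟨γ.rename q hq, ⟨q, isIso_rename γ hq⟩,
    ((hφ.comp (isIso_rename γ hq).prefixEmb).congr fun x hx => hqφ x hx).le⟩

lemma _root_.Pom.exists_le_of_pomLe {A S : Pom L} {σ : LPOF L} (hσ : σ ∈ S.1)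
    (h : pomLe A S) : ∃ γ ∈ A.1, γ.le σ := by
  obtain ⟨α₀, hα₀⟩ := A.exists_mem
  obtain ⟨β, hβ, hle⟩ := h α₀ hα₀
  obtain ⟨g, hg, -⟩ := (Pom.iso_of_mem hβ hσ).exists_prefixEmb
  have hcomp := hle.prefixEmb.comp hg
  exact ⟨_, rename_mem hα₀ hcomp.injOn, hcomp.rename_le⟩

end

section

structure CanRestrict (σ : LPOF L) (P : Set ℕ) (l : ℕ → L) : Prop where
  subset : P ⊆ σ.N
  down_closed : ∀ x ∈ P, ∀ y, σ.lt y x → y ∈ P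
  nonempty : P.Nonempty
  bot_maximal : ∀ x ∈ P, l x = ⊥ → ∀ y ∈ P, ¬ σ.lt x y

open Classical in
noncomputable def restrict (σ : LPOF L) (P : Set ℕ) (l : ℕ → L) (h : CanRestrict σ P l) :
    LPOF L where
  N := P
  lt x y := σ.lt x y ∧ x ∈ P ∧ y ∈ P
  lab x := if x ∈ P then l x else ⊥
  form x := if x ∈ P then σ.form x else .top
  lt_mem hxy := hxy.2
  lt_trans h₁ h₂ := ⟨σ.lt_trans h₁.1 h₂.1, h₁.2.1, h₂.2.2⟩
  lt_irrefl x hx := σ.lt_irrefl x hx.1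
  finPred x := (σ.finPred x).subset fun _ hy => hy.1
  finLevel n := by
    refine (σ.finLevel n).subset fun x ⟨hx, hlev⟩ => ⟨h.subset hx, ?_⟩
    have := levOf_map_eq (r := fun x y => σ.lt x y ∧ x ∈ P ∧ y ∈ P) (s := σ.lt) (f := id)
      (X := P) (fun _ _ hab => hab.1)
      (fun a b hb hab => ⟨a, h.down_closed b hb a hab, rfl, hab, h.down_closed b hb a hab, hb⟩) hx
    exact this.trans hlev
  singleRoot := by
    have hroot : σ.root ∈ P := by
      obtain ⟨x, hx⟩ := h.nonempty
      rcases eq_root_or_root_lt (h.subset hx) with hr | hr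
      · exact hr ▸ hx
      · exact h.down_closed x hx _ hr
    refine ⟨σ.root, ⟨hroot, fun y hy => σ.not_lt_root y hy.1⟩, fun x ⟨hx, hmin⟩ => ?_⟩
    exact eq_root (h.subset hx) fun y hy => hmin y ⟨hy, h.down_closed x hx y hy, hx⟩
  bot_maximal x hx hbot y hy := h.bot_maximal x hx ((if_pos hx).symm.trans hbot) y hy.2.2 hy.1
  form_sat x hx := by simpa [if_pos hx] using σ.form_sat x (h.subset hx)
  form_free x hx y hy := by
    rw [if_pos hx] at hy
    have hyx := σ.form_free x (h.subset hx) y hy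
    exact ⟨hyx, h.down_closed x hx y hyx, hx⟩
  form_impl := by
    rintro x y ⟨hxy, hx, hy⟩ v hv
    rw [if_pos hy] at hv
    rw [if_pos hx]
    exact σ.form_impl hxy v hv
  lab_junk _ hx := if_neg hx
  form_junk _ hx := if_neg hx

variable {σ : LPOF L} {P : Set ℕ} {l : ℕ → L}

lemma restrict_lab (h : CanRestrict σ P l) {x : ℕ} (hx : x ∈ P) : (σ.restrict P l h).lab x = l x :=
  if_pos hx

lemma restrict_form (h : CanRestrict σ P l) {x : ℕ} (hx : x ∈ P) :
    (σ.restrict P l h).form x = σ.form x :=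
  if_pos hx

lemma restrict_Bot (h : CanRestrict σ P l) : (σ.restrict P l h).Bot = {x ∈ P | l x = ⊥} :=
  Set.ext fun _ => and_congr_right fun hx => by rw [restrict_lab h hx]

lemma restrict_succs (h : CanRestrict σ P l) {x : ℕ} (hx : x ∈ P) :
    (σ.restrict P l h).succs x = σ.succs x ∩ P := by
  ext y
  constructor
  · rintro ⟨⟨hxy, -, hy⟩, himm⟩
    refine ⟨⟨hxy, fun ⟨z, hxz, hzy⟩ => himm ⟨z, ?_, ?_⟩⟩, hy⟩
    · exact ⟨hxz, hx, h.down_closed y hy z hzy⟩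
    · exact ⟨hzy, h.down_closed y hy z hzy, hy⟩
  · rintro ⟨⟨hxy, himm⟩, hy⟩
    exact ⟨⟨hxy, hx, hy⟩, fun ⟨z, hxz, hzy⟩ => himm ⟨z, hxz.1, hzy.1⟩⟩

lemma restrict_le_restrict {P₁ P₂ : Set ℕ} {l₁ l₂ : ℕ → L} (h₁ : CanRestrict σ P₁ l₁)
    (h₂ : CanRestrict σ P₂ l₂) (hP : P₁ ⊆ P₂) (hl : ∀ x ∈ P₁, l₁ x ≤ l₂ x)
    (hcov : ∀ x ∈ P₁, ∀ y ∈ P₂, σ.lt x y → y ∉ P₁ → ∃ z ∈ P₁, l₁ z = ⊥ ∧ σ.lt z y) :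
    (σ.restrict P₁ l₁ h₁).le (σ.restrict P₂ l₂ h₂) := by
  refine ⟨hP, fun x hx y hy => h₁.down_closed x hx y hy.1, fun x y => ?_, fun x hx => ?_,
    fun x hx => ?_, fun x hx => ?_⟩
  · exact ⟨fun h => ⟨⟨h.1, hP h.2.1, hP h.2.2⟩, h.2⟩, fun h => ⟨h.1.1, h.2⟩⟩
  · rw [restrict_lab h₁ hx, restrict_lab h₂ (hP hx)]
    exact hl x hx
  · rw [restrict_form h₁ hx, restrict_form h₂ (hP hx)]
  · rw [restrict_succs h₁ hx, restrict_succs h₂ (hP hx), restrict_Bot h₁]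
    ext y
    constructor
    · rintro ⟨hy, hyP⟩
      exact ⟨⟨hy, hP hyP⟩, fun ⟨z, hz, hzy⟩ => h₁.bot_maximal z hz.1 hz.2 y hyP hzy.1⟩
    · rintro ⟨⟨hy, hyP₂⟩, hnot⟩
      refine ⟨hy, by_contra fun hyP => ?_⟩
      obtain ⟨z, hzP, hzbot, hzy⟩ := hcov x hx y hyP₂ hy.1 hyP
      exact hnot ⟨z, ⟨hzP, hzbot⟩, hzy, hP hzP, hyP₂⟩

lemma restrict_le (h : CanRestrict σ P l) (hl : ∀ x ∈ P, l x ≤ σ.lab x)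
    (hcov : ∀ x ∈ P, ∀ y, σ.lt x y → y ∉ P → ∃ z ∈ P, l z = ⊥ ∧ σ.lt z y) :
    (σ.restrict P l h).le σ := by
  refine ⟨h.subset, fun x hx y hy => h.down_closed x hx y hy, fun _ _ => Iff.rfl,
    fun x hx => ?_, fun x hx => restrict_form h hx, fun x hx => ?_⟩
  · rw [restrict_lab h hx]
    exact hl x hx
  · rw [restrict_succs h hx, restrict_Bot h]
    ext y
    constructor
    · rintro ⟨hy, hyP⟩
      exact ⟨hy, fun ⟨z, hz, hzy⟩ => h.bot_maximal z hz.1 hz.2 y hyP hzy⟩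
    · rintro ⟨hy, hnot⟩
      refine ⟨hy, by_contra fun hyP => ?_⟩
      obtain ⟨z, hzP, hzbot, hzy⟩ := hcov x hx y hy.1 hyP
      exact hnot ⟨z, ⟨hzP, hzbot⟩, hzy⟩

lemma le_restrict (h : CanRestrict σ σ.N l) (hl : ∀ x ∈ σ.N, σ.lab x ≤ l x) :
    σ.le (σ.restrict σ.N l h) := by
  refine ⟨subset_rfl, fun x hx y hy => hy.2.1, fun x y => ?_, fun x hx => ?_,
    fun x hx => (restrict_form h hx).symm, fun x hx => ?_⟩
  · exact ⟨fun hxy => ⟨⟨hxy, σ.lt_mem hxy⟩, σ.lt_mem hxy⟩, fun h => h.1.1⟩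
  · rw [restrict_lab h hx]
    exact hl x hx
  · rw [restrict_succs h hx, Set.inter_eq_left.mpr succs_subset_N]
    refine (sdiff_eq_left.mpr <| Set.disjoint_left.mpr fun y _ hy => ?_).symm
    obtain ⟨z, hz, hzy⟩ := hy
    exact not_lt_of_mem_Bot hz y hzy.1

end

section

variable {σ : LPOF L}

lemma canRestrict_trunc (σ : LPOF L) (n : ℕ) :
    CanRestrict σ {x ∈ σ.N | levOf σ.lt x ≤ n}
      (fun x => if levOf σ.lt x < n then σ.lab x else ⊥) := by
  refine ⟨fun x hx => hx.1, fun x ⟨_, hx⟩ y hy => ⟨(σ.lt_mem hy).1, ?_⟩,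
    ⟨σ.root, σ.root_mem, σ.levOf_root ▸ n.zero_le⟩, fun x ⟨hxN, hx⟩ hbot y ⟨_, hy⟩ hxy => ?_⟩
  · exact ((levOf_lt_levOf hy).trans_le hx).le
  · have := levOf_lt_levOf hxy
    split_ifs at hbot with hlt
    · exact σ.bot_maximal x hxN hbot y hxy
    · omega

/-- The truncation described by `IsTrunc`: levels up to `n`, those of level `n` relabelled `⊥`. -/
noncomputable def trunc (σ : LPOF L) (n : ℕ) : LPOF L := σ.restrict _ _ (σ.canRestrict_trunc n)

lemma finite_trunc_N (σ : LPOF L) (n : ℕ) : (σ.trunc n).N.Finite := σ.finite_levOf_le n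

lemma trunc_lab {n x : ℕ} (hx : x ∈ σ.N) (hlev : levOf σ.lt x < n) :
    (σ.trunc n).lab x = σ.lab x :=
  (restrict_lab (σ.canRestrict_trunc n) (x := x) ⟨hx, hlev.le⟩).trans (if_pos hlev)

lemma trunc_succs {n x : ℕ} (hx : x ∈ (σ.trunc n).N) :
    (σ.trunc n).succs x = σ.succs x ∩ (σ.trunc n).N :=
  restrict_succs _ hx

lemma levOf_of_mem_trunc_Bot (hσ : ∀ z ∈ σ.N, σ.lab z ≠ ⊥) {n z : ℕ}
    (hz : z ∈ (σ.trunc n).Bot) : levOf σ.lt z = n := by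
  obtain ⟨⟨hzN, hzn⟩, hbot⟩ : z ∈ {x ∈ {x ∈ σ.N | levOf σ.lt x ≤ n} |
      (if levOf σ.lt x < n then σ.lab x else ⊥) = ⊥} := restrict_Bot (σ.canRestrict_trunc n) ▸ hz
  split_ifs at hbot with hlt
  · exact absurd hbot (hσ z hzN)
  · omega

lemma exists_trunc_bot_lt {n y : ℕ} (hy : n < levOf σ.lt y) :
    ∃ z ∈ {x ∈ σ.N | levOf σ.lt x ≤ n},
      (if levOf σ.lt z < n then σ.lab z else ⊥) = ⊥ ∧ σ.lt z y := by
  obtain ⟨z, hzy, hz⟩ := σ.exists_lt_levOf_eq hy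
  exact ⟨z, ⟨(σ.lt_mem hzy).1, hz.le⟩, by simp [hz], hzy⟩

lemma trunc_le (σ : LPOF L) (n : ℕ) : (σ.trunc n).le σ :=
  restrict_le _ (fun x _ => by split_ifs <;> simp)
    fun _ _ y hxy hy => exists_trunc_bot_lt (not_le.mp fun h => hy ⟨(σ.lt_mem hxy).2, h⟩)

lemma trunc_mono (σ : LPOF L) {n m : ℕ} (h : n ≤ m) : (σ.trunc n).le (σ.trunc m) :=
  restrict_le_restrict _ _ (fun x hx => ⟨hx.1, hx.2.trans h⟩)
    (fun x _ => by split_ifs <;> first | exact le_rfl | exact bot_le | omega)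
    fun _ _ y hy _ hyn => exists_trunc_bot_lt (not_le.mp fun h => hyn ⟨hy.1, h⟩)

end

section

variable {α γ S : LPOF L}

lemma exists_prefixEmb_of_pomLe {A B : Pom L} (hα : α ∈ A.1) (hγ : γ ∈ B.1) (h : pomLe A B) :
    ∃ f, PrefixEmb α γ f := by
  obtain ⟨β, hβ, hle⟩ := h α hα
  obtain ⟨e, he, -⟩ := (Pom.iso_of_mem hβ hγ).exists_prefixEmb
  exact ⟨e ∘ id, hle.prefixEmb.comp he⟩

lemma levOf_trunc_map {n : ℕ} {g : ℕ → ℕ} (hg : PrefixEmb (S.trunc n) γ g) {u : ℕ}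
    (hu : u ∈ (S.trunc n).N) : levOf γ.lt (g u) = levOf S.lt u :=
  (hg.levOf_eq hu).trans ((S.trunc_le n).levOf_eq hu)

lemma not_lt_of_mem_trunc_Bot (hS : ∀ z ∈ S.N, S.lab z ≠ ⊥) {n : ℕ} {g : ℕ → ℕ}
    (hg : PrefixEmb (S.trunc n) γ g) {w z : ℕ} (hw : levOf γ.lt w < n)
    (hz : z ∈ (S.trunc n).Bot) : ¬ γ.lt (g z) w := fun hzw => by
  have := levOf_lt_levOf hzw
  rw [levOf_trunc_map hg (Bot_subset_N hz), levOf_of_mem_trunc_Bot hS hz] at this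
  omega

lemma surjOn_trunc_limit (hS : ∀ z ∈ S.N, S.lab z ≠ ⊥) {g : ℕ → ℕ → ℕ}
    (hg : ∀ n, PrefixEmb (S.trunc n) γ (g n)) {U : Ultrafilter ℕ} (hU : ∀ m, ∀ᶠ n : ℕ in U, m ≤ n)
    {G : ℕ → ℕ} (hG : ∀ x ∈ S.N, ∀ᶠ n in U, g n x = G x) : Set.SurjOn G S.N γ.N := by
  intro w hw
  have hT := S.finite_levOf_le (levOf γ.lt w)
  obtain ⟨u, hu, rfl⟩ := U.exists_limit_eq (w := w) hG hT (fun _ h => h.1) <|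
    (hU (levOf γ.lt w + 1)).mono fun n hn => by
      by_cases him : w ∈ g n '' (S.trunc n).N
      · obtain ⟨u, hu, rfl⟩ := him
        exact ⟨u, ⟨hu.1, (levOf_trunc_map (hg n) hu).ge⟩, rfl⟩
      · obtain ⟨z, hz, hzw⟩ := (hg n).exists_Bot_lt_of_notMem_image hw him
        exact absurd hzw (not_lt_of_mem_trunc_Bot hS (hg n) (by omega) hz)
  exact ⟨u, hu.1, rfl⟩

lemma eventually_trunc_limit {g : ℕ → ℕ → ℕ} {U : Ultrafilter ℕ}
    (hU : ∀ m, ∀ᶠ n : ℕ in U, m ≤ n) {G : ℕ → ℕ} (hG : ∀ x ∈ S.N, ∀ᶠ n in U, g n x = G x)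
    {x : ℕ} (hx : x ∈ S.N) :
    ∀ᶠ n in U, x ∈ (S.trunc n).N ∧ levOf S.lt x < n ∧ g n x = G x :=
  ((hU (levOf S.lt x + 1)).and (hG x hx)).mono fun _ hn => ⟨⟨hx, by omega⟩, by omega, hn.2⟩

lemma image_succs_trunc_limit (hS : ∀ z ∈ S.N, S.lab z ≠ ⊥) {g : ℕ → ℕ → ℕ}
    (hg : ∀ n, PrefixEmb (S.trunc n) γ (g n)) {U : Ultrafilter ℕ} (hU : ∀ m, ∀ᶠ n : ℕ in U, m ≤ n)
    {G : ℕ → ℕ} (hG : ∀ x ∈ S.N, ∀ᶠ n in U, g n x = G x) {x : ℕ} (hx : x ∈ S.N) :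
    G '' S.succs x = γ.succs (G x) := by
  have hev := fun {y} => eventually_trunc_limit hU hG (x := y)
  ext w
  constructor
  · rintro ⟨y, hy, rfl⟩
    obtain ⟨n, ⟨hxn, -, hgx⟩, hyn, -, hgy⟩ := (hev hx |>.and (hev (succs_subset_N hy))).exists
    rw [← hgx, ← hgy]
    have : g n y ∈ g n '' (S.trunc n).succs x := ⟨y, trunc_succs hxn ▸ ⟨hy, hyn⟩, rfl⟩
    exact ((hg n).image_succs x hxn ▸ this).1
  · intro hw
    have hT := (S.finite_levOf_le (levOf γ.lt w)).inter_of_left (S.succs x)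
    obtain ⟨u, hu, rfl⟩ := U.exists_limit_eq (w := w) hG hT (fun _ h => h.1.1) <|
      ((hev hx).and (hU (levOf γ.lt w + 1))).mono fun n ⟨⟨hxn, _, hgx⟩, hn⟩ => by
        have hw' : w ∈ γ.succs (g n x) \ γ.succPlus (g n '' (S.trunc n).Bot) :=
          ⟨hgx ▸ hw, fun ⟨_, ⟨z, hz, rfl⟩, hzw⟩ =>
            not_lt_of_mem_trunc_Bot hS (hg n) (by omega) hz hzw⟩
        obtain ⟨u, hu, rfl⟩ := (hg n).image_succs x hxn ▸ hw'
        rw [trunc_succs hxn] at hu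
        exact ⟨u, ⟨⟨hu.2.1, (levOf_trunc_map (hg n) hu.2).ge⟩, hu.1⟩, rfl⟩
    exact ⟨u, hu.2, rfl⟩

lemma prefixEmb_trunc_limit (hS : ∀ z ∈ S.N, S.lab z ≠ ⊥) {g : ℕ → ℕ → ℕ}
    (hg : ∀ n, PrefixEmb (S.trunc n) γ (g n)) {U : Ultrafilter ℕ} (hU : ∀ m, ∀ᶠ n : ℕ in U, m ≤ n)
    {G : ℕ → ℕ} (hG : ∀ x ∈ S.N, ∀ᶠ n in U, g n x = G x) : PrefixEmb S γ G := by
  have hev := fun {x} => eventually_trunc_limit hU hG (x := x)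
  refine ⟨fun x hx y hy hxy => ?_, fun x hx => ?_, fun x hx y hy => ?_,
    fun x _ w hw => surjOn_trunc_limit hS hg hU hG (γ.lt_mem hw).1, fun x hx => ?_,
    fun x hx => ?_, fun x hx => ?_⟩
  · obtain ⟨n, ⟨hxn, -, hx⟩, hyn, -, hy⟩ := ((hev hx).and (hev hy)).exists
    exact (hg n).injOn hxn hyn (hx.trans (hxy.trans hy.symm))
  · obtain ⟨n, hxn, -, hgx⟩ := (hev hx).exists
    exact hgx ▸ (hg n).mapsTo hxn
  · obtain ⟨n, ⟨hxn, -, hgx⟩, hyn, -, hgy⟩ := ((hev hx).and (hev hy)).exists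
    rw [← hgx, ← hgy]
    exact ⟨fun h => ((hg n).lt_iff x hxn y hyn).mp ⟨h, hxn, hyn⟩,
      fun h => (((hg n).lt_iff x hxn y hyn).mpr h).1⟩
  · obtain ⟨n, hxn, hlt, hgx⟩ := (hev hx).exists
    rw [← hgx, ← trunc_lab hx hlt]
    exact (hg n).lab_le x hxn
  · have hvars := S.form x |>.vars_finite
    obtain ⟨n, ⟨hxn, -, hgx⟩, hv⟩ := ((hev hx).and ((Filter.eventually_all_finite hvars).mpr
      fun v hv => hG v (S.vars_subset_N hx hv))).exists
    rw [← hgx, (hg n).form_eq x hxn, (S.trunc_le n).2.2.2.2.1 x hxn]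
    exact Form.rename_congr _ hv
  · have hBot : S.Bot = ∅ := Set.eq_empty_of_forall_notMem fun z hz => hS z hz.1 hz.2
    rw [hBot, Set.image_empty, succPlus_empty, Set.sdiff_empty]
    exact image_succs_trunc_limit hS hg hU hG hx

end

section

variable {α γ S : LPOF L}

lemma pomLe_toPom_of_le (h : α.le γ) (hα : α.N.Finite) : pomLe α.toPom γ.toPom :=
  pomLe_of_prefixEmb (mem_toPom α) (mem_toPom γ) h.prefixEmb (Or.inl hα)

lemma toPom_pomLe_of_forall_trunc (hS : ∀ z ∈ S.N, S.lab z ≠ ⊥) {c : Pom L}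
    (hc : ∀ n, pomLe (S.trunc n).toPom c) : pomLe S.toPom c := by
  obtain ⟨γ, hγ⟩ := c.exists_mem
  choose g hg using fun n => exists_prefixEmb_of_pomLe (mem_toPom _) hγ (hc n)
  let U : Ultrafilter ℕ := .of Filter.atTop
  have hU : ∀ m, ∀ᶠ n : ℕ in U, m ≤ n :=
    fun m => Ultrafilter.of_le _ (Filter.eventually_ge_atTop m)
  obtain ⟨G, hG⟩ := U.exists_limit (f := g) (T := fun x => γ.level (levOf S.lt x))
    (fun _ _ => γ.finLevel _) fun x hx => (hU (levOf S.lt x)).mono fun n hn =>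
      ⟨(hg n).mapsTo ⟨hx, hn⟩, levOf_trunc_map (hg n) ⟨hx, hn⟩⟩
  have hG' : ∀ x ∈ S.N, ∀ᶠ n in U, g n x = G x := fun x hx => (hG x hx).2
  exact pomLe_of_prefixEmb (mem_toPom S) hγ (prefixEmb_trunc_limit hS hg hU hG')
    (Or.inr (surjOn_trunc_limit hS hg hU hG'))

lemma directedOn_trunc (S : LPOF L) : DirectedOn pomLe (Set.range fun n => (S.trunc n).toPom) := by
  rintro _ ⟨n, rfl⟩ _ ⟨m, rfl⟩
  exact ⟨_, ⟨max n m, rfl⟩,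
    pomLe_toPom_of_le (S.trunc_mono (le_max_left n m)) (S.finite_trunc_N n),
    pomLe_toPom_of_le (S.trunc_mono (le_max_right n m)) (S.finite_trunc_N m)⟩

lemma isSup_trunc (hS : ∀ z ∈ S.N, S.lab z ≠ ⊥) :
    isSup pomLe (Set.range fun n => (S.trunc n).toPom) S.toPom := by
  refine ⟨?_, fun c hc => toPom_pomLe_of_forall_trunc hS fun n => hc _ ⟨n, rfl⟩⟩
  rintro _ ⟨n, rfl⟩
  exact pomLe_toPom_of_le (S.trunc_le n) (S.finite_trunc_N n)

/-- Relabelling the `⊥`-nodes by the label of the root, which is not `⊥` once there is a second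
node. -/
lemma exists_le_of_nontrivial (hα : α.N.Nontrivial) :
    ∃ S : LPOF L, (∀ z ∈ S.N, S.lab z ≠ ⊥) ∧ α.le S ∧ S.N = α.N := by
  classical
  have hroot : α.lab α.root ≠ ⊥ := by
    obtain ⟨y, hy, hne⟩ := hα.exists_ne α.root
    rcases eq_root_or_root_lt hy with h | h
    · exact absurd h hne
    · exact fun hbot => α.bot_maximal _ α.root_mem hbot y h
  let l x := if α.lab x = ⊥ then α.lab α.root else α.lab x
  have hl : ∀ x, l x ≠ ⊥ := fun x => by dsimp only [l]; split_ifs with h <;> assumption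
  have h : CanRestrict α α.N l :=
    ⟨subset_rfl, fun _ _ y hy => (α.lt_mem hy).1, ⟨_, α.root_mem⟩, fun x _ hx => absurd hx (hl x)⟩
  refine ⟨α.restrict α.N l h, fun z hz => restrict_lab h hz ▸ hl z, le_restrict h fun x _ => ?_,
    rfl⟩
  dsimp only [l]
  split_ifs with hx
  · exact hx ▸ bot_le
  · exact le_rfl

end

section

variable {α β ρ σ : LPOF L} {f : ℕ → ℕ}

lemma PrefixEmb.mapsTo_level (hf : PrefixEmb α β f) (k : ℕ) :
    Set.MapsTo f (α.level k) (β.level k) :=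
  fun _ hx => ⟨hf.mapsTo hx.1, (hf.levOf_eq hx.1).trans hx.2⟩

lemma PrefixEmb.surjOn_of_ncard_level_le (hf : PrefixEmb α β f)
    (h : ∀ k, (β.level k).ncard ≤ (α.level k).ncard) : Set.SurjOn f α.N β.N := by
  intro y hy
  have himage := Set.eq_of_subset_of_ncard_le (hf.mapsTo_level _).image_subset
    ((h _).trans_eq (hf.injOn.mono (Set.sep_subset _ _)).ncard_image.symm)
    (β.finLevel (levOf β.lt y))
  have hy' : y ∈ β.level (levOf β.lt y) := ⟨hy, rfl⟩
  rw [← himage] at hy'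
  obtain ⟨x, hx, rfl⟩ := hy'
  exact ⟨x, hx.1, rfl⟩

lemma PrefixEmb.ncard_level_eq (hf : PrefixEmb α β f) (hs : Set.SurjOn f α.N β.N) (k : ℕ) :
    (β.level k).ncard = (α.level k).ncard := by
  refine Eq.trans ?_ (hf.injOn.mono (Set.sep_subset _ _)).ncard_image
  refine congrArg Set.ncard (Set.Subset.antisymm (fun y hy => ?_) (hf.mapsTo_level k).image_subset)
  obtain ⟨x, hx, rfl⟩ := hs hy.1
  exact ⟨x, ⟨hx, (hf.levOf_eq hx).symm.trans hy.2⟩, rfl⟩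

/-- Level by level, the embedding is a bijection of a finite set along which labels can only
grow. -/
lemma le.mem_and_lab_eq_of_prefixEmb (hle : ρ.le σ) (hG : PrefixEmb σ ρ f) {y : ℕ}
    (hy : y ∈ σ.N) : y ∈ ρ.N ∧ ρ.lab y = σ.lab y := by
  have hGσ : PrefixEmb σ σ f := hG.comp hle.prefixEmb
  obtain ⟨x, hx, rfl⟩ := hGσ.surjOn_of_ncard_level_le (fun _ => le_rfl) hy
  have hlab := (σ.finLevel (levOf σ.lt x)).map_le_of_mapsTo_injOn (hGσ.mapsTo_level _)
    (hGσ.injOn.mono (Set.sep_subset _ _)) (g := σ.lab) (fun z hz => hGσ.lab_le z hz.1) ⟨hx, rfl⟩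
  exact ⟨hG.mapsTo hx, le_antisymm (hle.2.2.2.1 _ (hG.mapsTo hx)) (hlab.trans (hG.lab_le x hx))⟩

lemma exists_rename_N_eq_univ (hinf : α.N.Infinite) :
    ∃ q, ∃ hq : Set.InjOn q α.N, (α.rename q hq).N = Set.univ := by
  have := hinf.to_subtype
  obtain ⟨_⟩ := nonempty_denumerable α.N
  let E := Denumerable.eqv α.N
  classical
  refine ⟨fun x => if hx : x ∈ α.N then E ⟨x, hx⟩ else 0, fun a ha b hb hab => ?_,
    Set.eq_univ_of_forall fun m => ⟨E.symm m, (E.symm m).2, by simp⟩⟩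
  simpa [ha, hb] using hab

/-- A representative of `C` using every natural number leaves no room for extra nodes. -/
lemma ncard_level_le_of_pomLe {C S' : Pom L} (hα : α ∈ C.1) (hσ : σ ∈ S'.1)
    (hinf : α.N.Infinite) (h : pomLe C S') (k : ℕ) : (σ.level k).ncard ≤ (α.level k).ncard := by
  obtain ⟨q, hq, huniv⟩ := exists_rename_N_eq_univ hinf
  obtain ⟨β, hβ, hle⟩ := h _ (rename_mem hα hq)
  have hsurj : Set.SurjOn id (α.rename q hq).N β.N := fun y _ => ⟨y, huniv ▸ trivial, rfl⟩
  obtain ⟨e, he, hes⟩ := (Pom.iso_of_mem hβ hσ).exists_prefixEmb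
  rw [he.ncard_level_eq hes, hle.prefixEmb.ncard_level_eq hsurj,
    (isIso_rename α hq).prefixEmb.ncard_level_eq (isIso_rename α hq).1.surjOn]

end

section

variable {α γ ρ σ : LPOF L} {x y : ℕ}

lemma le.mem_succs_iff (h : ρ.le σ) (hx : x ∈ ρ.N) (hy : y ∈ ρ.N) :
    y ∈ ρ.succs x ↔ y ∈ σ.succs x := by
  rw [h.2.2.2.2.2 x hx]
  exact ⟨And.left, fun hs => ⟨hs, fun ⟨z, hz, hzy⟩ =>
    not_lt_of_mem_Bot hz y ((h.2.2.1 z y).mpr ⟨hzy, hz.1, hy⟩)⟩⟩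

lemma le.le_of_subset (hα : α.le σ) (hγ : γ.le σ) (hN : α.N ⊆ γ.N)
    (hlab : ∀ x ∈ α.N, α.lab x ≤ γ.lab x) : α.le γ := by
  have hlt : ∀ a b, γ.lt a b → σ.lt a b := fun a b h => ((hγ.2.2.1 a b).mp h).1
  refine ⟨hN, fun x hx y hy => hα.2.1 x hx y (hlt y x hy), fun a b => ?_, hlab,
    fun x hx => (hα.2.2.2.2.1 x hx).trans (hγ.2.2.2.2.1 x (hN hx)).symm, fun x hx => ?_⟩
  · rw [hα.2.2.1, hγ.2.2.1]
    exact ⟨fun ⟨h, ha, hb⟩ => ⟨⟨h, hN ha, hN hb⟩, ha, hb⟩, fun ⟨⟨h, _⟩, hab⟩ => ⟨h, hab⟩⟩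
  ext y
  have hsucc : ∀ y, y ∈ γ.N → (y ∈ γ.succs x ↔ y ∈ σ.succs x) :=
    fun y hy => hγ.mem_succs_iff (hN hx) hy
  constructor
  · intro hy
    have hyα := succs_subset_N hy
    rw [hα.2.2.2.2.2 x hx] at hy
    refine ⟨(hsucc y (hN hyα)).mpr hy.1, fun ⟨z, hz, hzy⟩ => hy.2 ⟨z, hz, hlt z y hzy⟩⟩
  · rintro ⟨hy, hnot⟩
    have hyγ := succs_subset_N hy
    rw [hα.2.2.2.2.2 x hx]
    refine ⟨(hsucc y hyγ).mp hy, fun ⟨z, hz, hzy⟩ => hnot ⟨z, hz, ?_⟩⟩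
    exact (hγ.2.2.1 z y).mpr ⟨hzy, hN (Bot_subset_N hz), hyγ⟩

variable {ι : Type*}

structure IsLimit (U : Ultrafilter ι) (γ : ι → LPOF L) (σ ρ : LPOF L) : Prop where
  prefix_le : ∀ j, (γ j).le σ
  le : ρ.le σ
  mem_N : ∀ x, x ∈ ρ.N ↔ x ∈ σ.N ∧ ∀ᶠ j in U, x ∈ (γ j).N
  lab : ∀ x ∈ ρ.N, ∀ᶠ j in U, (γ j).lab x = ρ.lab x

lemma finite_setOf_le_lab (σ : LPOF L) (x : ℕ) : {v : L | v ≤ σ.lab x}.Finite :=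
  ((LabelDCPO.finitelyPreceded (σ.lab x)).insert _).subset fun _ hv => hv.eq_or_lt

lemma exists_isLimit (U : Ultrafilter ι) {γ : ι → LPOF L} (hγ : ∀ j, (γ j).le σ) :
    ∃ ρ, IsLimit U γ σ ρ := by
  let P := {x ∈ σ.N | ∀ᶠ j in U, x ∈ (γ j).N}
  have : Nonempty L := ⟨⊥⟩
  obtain ⟨l, hl⟩ := U.exists_limit (X := P) (f := fun j x => (γ j).lab x)
    (fun x _ => σ.finite_setOf_le_lab x) fun x hx => hx.2.mono fun j hj => (hγ j).2.2.2.1 x hj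
  have h : CanRestrict σ P l := by
    refine ⟨Set.sep_subset _ _, fun x hx y hyx => ⟨(σ.lt_mem hyx).1, ?_⟩,
      ⟨σ.root, σ.root_mem, .of_forall fun j => (hγ j).prefixEmb.map_root ▸ (γ j).root_mem⟩,
      fun x hx hbot y hy hxy => ?_⟩
    · exact hx.2.mono fun j hj => (hγ j).2.1 x hj y hyx
    · obtain ⟨j, hjx, hjlab, hjy⟩ := (hx.2.and ((hl x hx).2.and hy.2)).exists
      exact (γ j).bot_maximal x hjx (hjlab.trans hbot) y ((hγ j).2.2.1 x y |>.mpr ⟨hxy, hjx, hjy⟩)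
  refine ⟨σ.restrict P l h, hγ, restrict_le h (fun x hx => (hl x hx).1) fun x _ y hxy hy => ?_,
    fun x => Iff.rfl, fun x hx => (hl x hx).2.mono fun j hj => hj.trans (restrict_lab h hx).symm⟩
  have hyN := (σ.lt_mem hxy).2
  have hev : ∀ᶠ j in U, ∃ z ∈ {z | σ.lt z y}, z ∈ (γ j).Bot :=
    (Ultrafilter.eventually_not.mpr fun h' => hy ⟨hyN, h'⟩).mono fun j hj => by
      obtain ⟨z, hz, hzy⟩ := (hγ j).prefixEmb.exists_Bot_lt_of_notMem_image hyN (by simpa using hj)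
      exact ⟨z, hzy, hz⟩
  obtain ⟨z, hzy, hz⟩ := (U.eventually_exists_mem_iff (σ.finPred y)).mp hev
  have hzP : z ∈ P := ⟨(σ.lt_mem hzy).1, hz.mono fun j hj => hj.1⟩
  obtain ⟨j, hj, hjl⟩ := (hz.and (hl z hzP).2).exists
  exact ⟨z, hzP, hjl ▸ hj.2, hzy⟩

end

namespace IsLimit

variable {ι : Type*} {U : Ultrafilter ι} {γ : ι → LPOF L} {α ρ σ : LPOF L} {f : ι → ℕ → ℕ}
  {H : ℕ → ℕ}

lemma mapsTo_limit (hρ : IsLimit U γ σ ρ) (hf : ∀ᶠ j in U, PrefixEmb α (γ j) (f j))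
    (hH : ∀ x ∈ α.N, ∀ᶠ j in U, f j x = H x) : Set.MapsTo H α.N ρ.N := by
  intro x hx
  have hev := (hf.and (hH x hx)).mono fun j ⟨hj, hjx⟩ => hjx ▸ hj.mapsTo hx
  obtain ⟨j, hj⟩ := hev.exists
  exact (hρ.mem_N _).mpr ⟨(hρ.prefix_le j).1 hj, hev⟩

lemma lt_iff_limit (hρ : IsLimit U γ σ ρ) (hf : ∀ᶠ j in U, PrefixEmb α (γ j) (f j))
    (hH : ∀ x ∈ α.N, ∀ᶠ j in U, f j x = H x) {x y : ℕ} (hx : x ∈ α.N) (hy : y ∈ α.N) :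
    α.lt x y ↔ ρ.lt (H x) (H y) := by
  obtain ⟨j, hj, hjx, hjy⟩ := (hf.and ((hH x hx).and (hH y hy))).exists
  have hmaps := hρ.mapsTo_limit hf hH
  rw [hj.lt_iff x hx y hy, (hρ.prefix_le j).2.2.1, hρ.le.2.2.1, ← hjx, ← hjy]
  exact ⟨fun h => ⟨h.1, hjx ▸ hmaps hx, hjy ▸ hmaps hy⟩, fun h => ⟨h.1, hj.mapsTo hx, hj.mapsTo hy⟩⟩

/-- Only the finitely many nodes of `α` of the level of `w` are candidates. -/
lemma exists_limit_eq (hρ : IsLimit U γ σ ρ) (hf : ∀ᶠ j in U, PrefixEmb α (γ j) (f j))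
    (hH : ∀ x ∈ α.N, ∀ᶠ j in U, f j x = H x) {p : ℕ → Prop} {w : ℕ}
    (h : ∀ᶠ j in U, ∃ u ∈ α.N, p u ∧ f j u = w) : ∃ u ∈ α.N, p u ∧ H u = w := by
  have hT := (α.finite_levOf_le (levOf σ.lt w)).inter_of_left {u | p u}
  obtain ⟨u, ⟨hu, hpu⟩, rfl⟩ := U.exists_limit_eq hH hT (fun _ h => h.1.1) <|
    (hf.and h).mono fun j ⟨hj, u, hu, hpu, hjw⟩ => by
      refine ⟨u, ⟨⟨hu, ?_⟩, hpu⟩, hjw⟩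
      rw [← hj.levOf_eq hu, hjw, (hρ.prefix_le j).levOf_eq (hjw ▸ hj.mapsTo hu)]
  exact ⟨u, hu.1, hpu, rfl⟩

lemma image_succs_limit (hρ : IsLimit U γ σ ρ) (hf : ∀ᶠ j in U, PrefixEmb α (γ j) (f j))
    (hH : ∀ x ∈ α.N, ∀ᶠ j in U, f j x = H x) {x : ℕ} (hx : x ∈ α.N) :
    H '' α.succs x = ρ.succs (H x) \ ρ.succPlus (H '' α.Bot) := by
  have hmaps := hρ.mapsTo_limit hf hH
  have hlt := fun {a b} => hρ.lt_iff_limit hf hH (x := a) (y := b)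
  ext w
  constructor
  · rintro ⟨y, hy, rfl⟩
    have hyα := succs_subset_N hy
    obtain ⟨j, hj, hjx, hjy⟩ := (hf.and ((hH x hx).and (hH y hyα))).exists
    have hsucc : f j y ∈ f j '' α.succs x := ⟨y, hy, rfl⟩
    rw [hj.image_succs x hx] at hsucc
    replace hsucc := hsucc.1
    rw [(hρ.prefix_le j).mem_succs_iff (hj.mapsTo hx) (hj.mapsTo hyα), hjx, hjy,
      ← hρ.le.mem_succs_iff (hmaps hx) (hmaps hyα)] at hsucc
    refine ⟨hsucc, fun ⟨_, ⟨b, hb, rfl⟩, hby⟩ => ?_⟩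
    exact not_lt_of_mem_Bot hb y ((hlt (Bot_subset_N hb) hyα).mpr hby)
  · rintro ⟨hw, hnot⟩
    have hwρ := succs_subset_N hw
    rw [hρ.le.mem_succs_iff (hmaps hx) hwρ] at hw
    have hev : ∀ᶠ j in U, (∃ u ∈ α.N, u ∈ α.succs x ∧ f j u = w) ∨
        ∃ z ∈ {z | σ.lt z w}, ∃ b ∈ α.N, b ∈ α.Bot ∧ f j b = z := by
      filter_upwards [hf, hH x hx, ((hρ.mem_N w).mp hwρ).2] with j hj hjx hjw
      have hw' : w ∈ (γ j).succs (f j x) := by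
        rwa [(hρ.prefix_le j).mem_succs_iff (hj.mapsTo hx) hjw, hjx]
      by_cases hB : w ∈ (γ j).succPlus (f j '' α.Bot)
      · obtain ⟨_, ⟨b, hb, rfl⟩, hbw⟩ := hB
        exact .inr ⟨f j b, ((hρ.prefix_le j).2.2.1 _ _ |>.mp hbw).1, b, Bot_subset_N hb, hb, rfl⟩
      · have : w ∈ f j '' α.succs x := by rw [hj.image_succs x hx]; exact ⟨hw', hB⟩
        obtain ⟨u, hu, rfl⟩ := this
        exact .inl ⟨u, succs_subset_N hu, hu, rfl⟩
    rcases Ultrafilter.eventually_or.mp hev with hA | hB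
    · obtain ⟨u, -, hu, rfl⟩ := hρ.exists_limit_eq hf hH hA
      exact ⟨u, hu, rfl⟩
    · obtain ⟨z, hzw, hz⟩ := (U.eventually_exists_mem_iff (σ.finPred w)).mp hB
      obtain ⟨b, hbα, hb, rfl⟩ := hρ.exists_limit_eq hf hH hz
      exact absurd ⟨H b, ⟨b, hb, rfl⟩, (hρ.le.2.2.1 _ _).mpr ⟨hzw, hmaps hbα, hwρ⟩⟩ hnot

lemma prefixEmb_limit (hρ : IsLimit U γ σ ρ) (hf : ∀ᶠ j in U, PrefixEmb α (γ j) (f j))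
    (hH : ∀ x ∈ α.N, ∀ᶠ j in U, f j x = H x) : PrefixEmb α ρ H := by
  refine ⟨fun x hx y hy hxy => ?_, hρ.mapsTo_limit hf hH,
    fun x hx y hy => hρ.lt_iff_limit hf hH hx hy, fun x hx w hw => ?_, fun x hx => ?_,
    fun x hx => ?_, fun x hx => hρ.image_succs_limit hf hH hx⟩
  · obtain ⟨j, hj, hjx, hjy⟩ := (hf.and ((hH x hx).and (hH y hy))).exists
    exact hj.injOn hx hy (hjx.trans (hxy.trans hjy.symm))
  · have hwρ := (ρ.lt_mem hw).1
    obtain ⟨u, hu, -, rfl⟩ := hρ.exists_limit_eq hf hH (p := fun _ => True) (w := w) <| by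
      filter_upwards [hf, hH x hx, ((hρ.mem_N w).mp hwρ).2] with j hj hjx hjw
      have : (γ j).lt w (f j x) := (hρ.prefix_le j).2.2.1 _ _ |>.mpr
        ⟨hjx ▸ ((hρ.le.2.2.1 _ _).mp hw).1, hjw, hjx ▸ hj.mapsTo hx⟩
      obtain ⟨u, hu, rfl⟩ := hj.exists_eq_of_lt x hx w this
      exact ⟨u, hu, trivial, rfl⟩
    exact ⟨u, hu, rfl⟩
  · have hHx := hρ.mapsTo_limit hf hH hx
    obtain ⟨j, hj, hjx, hjl⟩ := (hf.and ((hH x hx).and (hρ.lab _ hHx))).exists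
    exact hjl ▸ hjx ▸ hj.lab_le x hx
  · have hvars := (α.form x).vars_finite
    obtain ⟨j, hj, hjx, hv⟩ := (hf.and ((hH x hx).and ((Filter.eventually_all_finite hvars).mpr
      fun v hv => hH v (α.vars_subset_N hx hv)))).exists
    rw [hρ.le.2.2.2.2.1 _ (hρ.mapsTo_limit hf hH hx), ← hjx,
      ← (hρ.prefix_le j).2.2.2.2.1 _ (hj.mapsTo hx), hj.form_eq x hx]
    exact Form.rename_congr _ hv

end IsLimit

section

variable {ι : Type*} {U : Ultrafilter ι} {γ : ι → LPOF L} {α ρ σ : LPOF L}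

lemma IsLimit.pomLe_toPom (hρ : IsLimit U γ σ ρ) {C S' : Pom L} (hα : α ∈ C.1) (hσ : σ ∈ S'.1)
    (hCS : pomLe C S') (hC : ∀ᶠ j in U, ∃ f, PrefixEmb α (γ j) f) : pomLe C ρ.toPom := by
  have : ∀ j, ∃ f : ℕ → ℕ, (∃ f, PrefixEmb α (γ j) f) → PrefixEmb α (γ j) f := fun j => by
    by_cases h : ∃ f, PrefixEmb α (γ j) f
    · exact ⟨h.choose, fun _ => h.choose_spec⟩
    · exact ⟨id, fun h' => absurd h' h⟩
  choose f hf using this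
  have hf' : ∀ᶠ j in U, PrefixEmb α (γ j) (f j) := hC.mono hf
  obtain ⟨H, hH⟩ := U.exists_limit (f := f) (T := fun x => σ.level (levOf α.lt x))
    (fun _ _ => σ.finLevel _) fun x hx => hf'.mono fun j hj =>
      (hj.comp (hρ.prefix_le j).prefixEmb).mapsTo_level _ ⟨hx, rfl⟩
  have hHρ := hρ.prefixEmb_limit hf' fun x hx => (hH x hx).2
  refine pomLe_of_prefixEmb hα (mem_toPom ρ) hHρ ((em α.N.Finite).imp id fun hinf => ?_)
  refine hHρ.surjOn_of_ncard_level_le fun k => (Set.ncard_le_ncard ?_ (σ.finLevel k)).trans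
    (ncard_level_le_of_pomLe hα hσ hinf hCS k)
  exact fun x hx => ⟨hρ.le.1 hx.1, (hρ.le.levOf_eq hx.1).symm.trans hx.2⟩

end

end LPOF

lemma pomLe_refl (A : Pom L) : pomLe A A := fun β hβ => ⟨β, hβ, LPOF.le.refl β⟩

lemma pomLe_trans {A B C : Pom L} (h₁ : pomLe A B) (h₂ : pomLe B C) : pomLe A C := by
  intro α hα
  obtain ⟨β, hβ, hαβ⟩ := h₁ α hα
  obtain ⟨δ, hδ, hβδ⟩ := h₂ β hβ
  exact ⟨δ, hδ, (hαβ.prefixEmb.comp hβδ.prefixEmb).le⟩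

open LPOF in
lemma pomFinite_of_pomCompact {A : Pom L} (hA : pomCompact A) : PomFinite A := by
  intro α hα
  by_contra hinf
  obtain ⟨S, hS, hαS, hN⟩ := exists_le_of_nontrivial (Set.not_subsingleton_iff.mp fun h =>
    hinf h.finite)
  have hAS : pomLe A S.toPom := pomLe_of_prefixEmb hα (mem_toPom S) hαS.prefixEmb
    (Or.inr fun x hx => ⟨x, hN ▸ hx, rfl⟩)
  obtain ⟨_, ⟨n, rfl⟩, hAC⟩ := hA _ (Set.range_nonempty _) S.directedOn_trunc _ (isSup_trunc hS) hAS
  obtain ⟨β, hβ, hαβ⟩ := hAC α hα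
  exact hinf ((iso.finite hβ (S.finite_trunc_N n)).subset hαβ.1)

open LPOF in
lemma pomCompact_of_pomFinite {A : Pom L} (hA : PomFinite A) : pomCompact A := by
  intro D hDne hDdir S' hSup hAS
  obtain ⟨σ, hσ⟩ := S'.exists_mem
  have := hDne.to_subtype
  choose γ hγ hγσ using fun i : D => Pom.exists_le_of_pomLe hσ (hSup.1 i.1 i.2)
  obtain ⟨U, hU⟩ := Ultrafilter.exists_eventually_rel_of_directed (fun i j : D => pomLe i.1 j.1)
    (fun i => pomLe_refl i.1) (fun _ _ _ => pomLe_trans) fun i j => by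
      obtain ⟨k, hk, hik, hjk⟩ := hDdir i.1 i.2 j.1 j.2
      exact ⟨⟨k, hk⟩, hik, hjk⟩
  obtain ⟨ρ, hρ⟩ := exists_isLimit U hγσ
  have hub : isUB pomLe D ρ.toPom := fun C hC => hρ.pomLe_toPom (hγ ⟨C, hC⟩) hσ (hSup.1 C hC)
    ((hU ⟨C, hC⟩).mono fun j hj => exists_prefixEmb_of_pomLe (hγ _) (hγ j) hj)
  obtain ⟨G, hG⟩ := exists_prefixEmb_of_pomLe hσ (mem_toPom ρ) (hSup.2 _ hub)
  obtain ⟨α, hα, hασ⟩ := Pom.exists_le_of_pomLe hσ hAS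
  have hev : ∀ᶠ j in U, ∀ x ∈ α.N, x ∈ (γ j).N ∧ (γ j).lab x = σ.lab x := by
    refine (Filter.eventually_all_finite (hA α hα)).mpr fun x hx => ?_
    obtain ⟨hxρ, hlab⟩ := hρ.le.mem_and_lab_eq_of_prefixEmb hG (hασ.1 hx)
    exact ((hρ.mem_N x).mp hxρ).2.and (hρ.lab x hxρ) |>.mono fun j hj => ⟨hj.1, hj.2.trans hlab⟩
  obtain ⟨j, hj⟩ := hev.exists
  refine ⟨j.1, j.2, pomLe_of_prefixEmb (f := id) hα (hγ j) ?_ (Or.inl (hA α hα))⟩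
  refine (hασ.le_of_subset (hγσ j) (fun x hx => (hj x hx).1) fun x hx => ?_).prefixEmb
  exact (hj x hx).2 ▸ hασ.2.2.2.1 x hx

/-- the compact elements of Pom(L) are exactly the finite pomsets. -/
theorem stmt15 {L : Type} [LabelDCPO L] :
    {A : Pom L | pomCompact A} = {A : Pom L | PomFinite A} :=
  Set.ext fun _ => ⟨pomFinite_of_pomCompact, pomCompact_of_pomFinite⟩
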